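/- arXiv:2003.07802 — 9 statements merged into one kernel-verified Lean document; each statement's English description precedes it below -/
import Mathlib

section
/- Fix positive integers n, p, a real n×p matrix X and y ∈ ℝⁿ. The function β̂gf(t) = (XᵀX)⁺(I − exp(−t XᵀX/n)) Xᵀ y satisfies β̂gf(0) = 0 and, for every t ≥ 0, the derivative d/dt β̂gf(t) exists and equals (1/n) Xᵀ (y − X β̂gf(t)); that is, β̂gf solves the gradient flow differential equation for the least squares loss (1/2n)‖y − Xβ‖₂². -/
open Matrix Filter

/-- The Moore–Penrose pseudoinverse of a real matrix, defined via the standard limit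
characterization `A⁺ = lim_{δ → 0⁺} (AᵀA + δ I)⁻¹ Aᵀ`. -/
noncomputable def moorePenrose {m n : ℕ} (A : Matrix (Fin m) (Fin n) ℝ) :
    Matrix (Fin n) (Fin m) ℝ :=
  limUnder (nhdsWithin (0 : ℝ) (Set.Ioi 0)) fun δ => (Aᵀ * A + δ • (1 : Matrix (Fin n) (Fin n) ℝ))⁻¹ * Aᵀ

/-- The gradient flow estimator `β̂gf(t) = (XᵀX)⁺ (I − exp(−t XᵀX/n)) Xᵀ y`. -/
noncomputable def betaGF {n p : ℕ} (X : Matrix (Fin n) (Fin p) ℝ) (y : Fin n → ℝ)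
    (t : ℝ) : Fin p → ℝ :=
  (moorePenrose (Xᵀ * X) *
      ((1 : Matrix (Fin p) (Fin p) ℝ) - NormedSpace.exp (-(t • ((n : ℝ)⁻¹ • (Xᵀ * X))))) *
      Xᵀ) *ᵥ y

/-! With `M = XᵀX`, the regularised inverses `(M² + δ)⁻¹ M` are the functional calculus of
`x ↦ (x² + δ)⁻¹ x`, which converges to `x ↦ x⁻¹` on the finite spectrum of `M` (also at `x = 0`,
where Lean's `0⁻¹ = 0` is the pseudoinverse convention). Hence `M⁺ = cfc (·⁻¹) M`, so `M⁺`
commutes with `M` and `M M⁺ M = M`. The latter gives `M M⁺ Xᵀ = Xᵀ`, since `(1 - M M⁺) XᵀX = 0`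
forces `(1 - M M⁺) Xᵀ = 0`. Writing `E(t) = exp(-t M / n)`, both sides of the gradient flow
equation then equal `(1/n) E(t) Xᵀ y`: the derivative of `β̂gf` is `M⁺ E(t) (M / n) Xᵀ y`, and
`Xᵀ (y - X β̂gf(t)) = Xᵀ y - M M⁺ (1 - E(t)) Xᵀ y`. -/

open Topology NormedSpace

theorem Set.Finite.tendstoUniformlyOn {α β ι : Type*} [UniformSpace β] {F : ι → α → β}
    {f : α → β} {l : Filter ι} {s : Set α} (hs : s.Finite)
    (h : ∀ x ∈ s, Tendsto (F · x) l (𝓝 (f x))) : TendstoUniformlyOn F f l s := fun u hu =>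
  hs.eventually_all.2 fun x hx =>
    (tendstoUniformlyOn_singleton_iff_tendsto.2 (h x hx) u hu).mono fun _ h => h x rfl

theorem tendsto_inv_mul_self_add_mul (x : ℝ) :
    Tendsto (fun δ : ℝ => (x * x + δ)⁻¹ * x) (𝓝 0) (𝓝 x⁻¹) := by
  rcases eq_or_ne x 0 with rfl | hx
  · simp
  · have hc : ContinuousAt (fun δ : ℝ => (x * x + δ)⁻¹ * x) 0 := by fun_prop (disch := simpa)
    simpa [mul_inv, hx] using hc.tendsto

namespace Matrix

theorem isHermitian_transpose_mul_self {m n : Type*} [Fintype m] (X : Matrix m n ℝ) :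
    (Xᵀ * X).IsHermitian := by
  simpa only [conjTranspose_eq_transpose_of_trivial] using isHermitian_conjTranspose_mul_self X

theorem continuousOn_real_spectrum {𝕜 n : Type*} [RCLike 𝕜] [Fintype n] [DecidableEq n]
    (A : Matrix n n 𝕜) (f : ℝ → ℝ) : ContinuousOn f (spectrum ℝ A) :=
  finite_real_spectrum.continuousOn f

theorem mul_conjTranspose_eq_zero_of_mul_conjTranspose_mul_self {R : Type*} [PartialOrder R]
    [NonUnitalRing R] [StarRing R] [StarOrderedRing R] [NoZeroDivisors R]
    {l m n : Type*} [Fintype m] [Fintype n] {A : Matrix l n R} {B : Matrix m n R}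
    (h : A * (Bᴴ * B) = 0) : A * Bᴴ = 0 := by
  rw [← self_mul_conjTranspose_eq_zero, conjTranspose_mul, conjTranspose_conjTranspose,
    Matrix.mul_assoc, ← Matrix.mul_assoc Bᴴ, ← Matrix.mul_assoc, h, Matrix.zero_mul]

namespace IsHermitian

variable {m : ℕ} {A : Matrix (Fin m) (Fin m) ℝ}

theorem moorePenrose_eq_cfc (hA : A.IsHermitian) : moorePenrose A = cfc (·⁻¹ : ℝ → ℝ) A := by
  have hAt : Aᵀ = A := by simpa only [conjTranspose_eq_transpose_of_trivial] using hA.eq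
  refine Tendsto.limUnder_eq
    (Tendsto.congr' (f₁ := fun δ => cfc (fun x => (x * x + δ)⁻¹ * x) A) ?_ ?_)
  · filter_upwards [self_mem_nhdsWithin] with δ (hδ : 0 < δ)
    have hpos : ∀ x ∈ spectrum ℝ A, x * x + δ ≠ 0 := fun x _ =>
      (add_pos_of_nonneg_of_pos (mul_self_nonneg x) hδ).ne'
    rw [cfc_mul _ _ _ (A.continuousOn_real_spectrum _) (A.continuousOn_real_spectrum _),
      cfc_inv (hf' := hpos) (hf := A.continuousOn_real_spectrum _),
      cfc_add (a := A) (fun x => x * x) (fun _ => δ), cfc_mul (fun x => x) (fun x => x) A,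
      cfc_id' ℝ A, cfc_const δ A, Algebra.algebraMap_eq_smul_one, hAt,
      nonsing_inv_eq_ringInverse]
  · exact tendsto_cfc_fun (finite_real_spectrum.tendstoUniformlyOn fun x _ =>
      (tendsto_inv_mul_self_add_mul x).mono_left nhdsWithin_le_nhds)
      (Eventually.of_forall fun _ => A.continuousOn_real_spectrum _)

theorem commute_moorePenrose (hA : A.IsHermitian) : Commute A (moorePenrose A) := by
  rw [hA.moorePenrose_eq_cfc]
  conv_lhs => rw [← cfc_id' ℝ A]
  exact cfc_commute_cfc _ _ A

theorem mul_moorePenrose_mul_self (hA : A.IsHermitian) : A * moorePenrose A * A = A :=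
  calc A * moorePenrose A * A = cfc (fun x : ℝ => x * x⁻¹ * x) A := by
        rw [cfc_mul (fun x : ℝ => x * x⁻¹) (fun x => x) A (A.continuousOn_real_spectrum _),
          cfc_mul (fun x : ℝ => x) (·⁻¹) A (hg := A.continuousOn_real_spectrum _), cfc_id' ℝ A,
          hA.moorePenrose_eq_cfc]
    _ = A := by simp only [mul_inv_mul_cancel, cfc_id' ℝ A]

end IsHermitian

theorem transpose_mul_self_mul_moorePenrose_mul_transpose {n p : ℕ}
    (X : Matrix (Fin n) (Fin p) ℝ) : Xᵀ * X * moorePenrose (Xᵀ * X) * Xᵀ = Xᵀ := by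
  have hXt : Xᴴ = Xᵀ := conjTranspose_eq_transpose_of_trivial X
  have hker : (1 - Xᵀ * X * moorePenrose (Xᵀ * X)) * (Xᴴ * X) = 0 := by
    rw [hXt, Matrix.sub_mul, Matrix.one_mul,
      (isHermitian_transpose_mul_self X).mul_moorePenrose_mul_self, sub_self]
  have := mul_conjTranspose_eq_zero_of_mul_conjTranspose_mul_self hker
  rwa [hXt, Matrix.sub_mul, Matrix.one_mul, sub_eq_zero, eq_comm] at this

theorem hasDerivAt_one_sub_exp_neg_smul {ι : Type*} [Fintype ι] [DecidableEq ι]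
    (B : Matrix ι ι ℝ) (t : ℝ) :
    HasDerivAt (fun s : ℝ => 1 - exp (-(s • B))) (exp (-(t • B)) * B) t := by
  open scoped Matrix.Norms.Operator in
  have h := (hasDerivAt_exp_smul_const (-B) t).const_sub 1
  simp only [smul_neg, Matrix.mul_neg, neg_neg] at h
  exact h

end Matrix

theorem HasDerivAt.matrix_mul_mul_mulVec {k l m o : Type*} [Fintype k] [Fintype l] [Fintype m]
    [Fintype o] {F : ℝ → Matrix l m ℝ} {F' : Matrix l m ℝ} {t : ℝ} (hF : HasDerivAt F F' t)
    (P : Matrix k l ℝ) (Q : Matrix m o ℝ) (y : o → ℝ) :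
    HasDerivAt (fun s => (P * F s * Q) *ᵥ y) ((P * F' * Q) *ᵥ y) t := by
  open scoped Matrix.Norms.Elementwise in
  exact (LinearMap.toContinuousLinearMap ((mulVecBilin ℝ ℝ).flip y ∘ₗ
    mulRightLinearMap k ℝ Q ∘ₗ mulLeftLinearMap m ℝ P)).hasFDerivAt.comp_hasDerivAt t hF

section GradientFlow

variable {n p : ℕ} (X : Matrix (Fin n) (Fin p) ℝ) (y : Fin n → ℝ) (t : ℝ)

theorem betaGF_zero : betaGF X y 0 = 0 := by
  simp [betaGF]

theorem hasDerivAt_betaGF :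
    HasDerivAt (betaGF X y)
      ((n : ℝ)⁻¹ • ((exp (-(t • ((n : ℝ)⁻¹ • (Xᵀ * X)))) * Xᵀ) *ᵥ y)) t := by
  have hMP := (isHermitian_transpose_mul_self X).commute_moorePenrose
  have hPE : Commute (moorePenrose (Xᵀ * X)) (exp (-(t • ((n : ℝ)⁻¹ • (Xᵀ * X))))) :=
    ((hMP.symm.smul_right _).smul_right _).neg_right.exp_right
  refine ((hasDerivAt_one_sub_exp_neg_smul ((n : ℝ)⁻¹ • (Xᵀ * X)) t).matrix_mul_mul_mulVec
    (moorePenrose (Xᵀ * X)) Xᵀ y).congr_deriv ?_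
  rw [← Matrix.mul_assoc, hPE.eq, Matrix.mul_smul, Matrix.smul_mul, Matrix.mul_assoc,
    Matrix.mul_assoc, ← Matrix.mul_assoc _ (Xᵀ * X), ← hMP.eq,
    transpose_mul_self_mul_moorePenrose_mul_transpose, smul_mulVec]

theorem transpose_mulVec_sub_mulVec_betaGF :
    Xᵀ *ᵥ (y - X *ᵥ betaGF X y t) = (exp (-(t • ((n : ℝ)⁻¹ • (Xᵀ * X)))) * Xᵀ) *ᵥ y := by
  have hMP := (isHermitian_transpose_mul_self X).commute_moorePenrose
  have hE : Commute (Xᵀ * X * moorePenrose (Xᵀ * X))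
      (1 - exp (-(t • ((n : ℝ)⁻¹ • (Xᵀ * X))))) :=
    (Commute.one_right _).sub_right
      ((((Commute.refl _).mul_left hMP.symm).smul_right _).smul_right _).neg_right.exp_right
  rw [betaGF, mulVec_sub, mulVec_mulVec, mulVec_mulVec, ← Matrix.mul_assoc, ← Matrix.mul_assoc,
    hE.eq, Matrix.mul_assoc, transpose_mul_self_mul_moorePenrose_mul_transpose, Matrix.sub_mul,
    Matrix.one_mul, sub_mulVec, sub_sub_cancel]

end GradientFlow

theorem stmt_0_general {n p : ℕ}
    (X : Matrix (Fin n) (Fin p) ℝ) (y : Fin n → ℝ) :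
    betaGF X y 0 = 0 ∧
      ∀ t : ℝ, 0 ≤ t →
        HasDerivAt (betaGF X y) ((n : ℝ)⁻¹ • (Xᵀ *ᵥ (y - X *ᵥ betaGF X y t))) t :=
  ⟨betaGF_zero X y, fun t _ => transpose_mulVec_sub_mulVec_betaGF X y t ▸ hasDerivAt_betaGF X y t⟩

/-- `β̂gf(0) = 0` and for every `t ≥ 0`, the derivative of `β̂gf` at `t`
exists and equals `(1/n) Xᵀ (y − X β̂gf(t))`, i.e. `β̂gf` solves the gradient flow
differential equation for the least squares loss `(1/2n)‖y − Xβ‖₂²`. -/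
theorem stmt_0 {n p : ℕ} (hn : 0 < n) (hp : 0 < p)
    (X : Matrix (Fin n) (Fin p) ℝ) (y : Fin n → ℝ) :
    betaGF X y 0 = 0 ∧
      ∀ t : ℝ, 0 ≤ t →
        HasDerivAt (betaGF X y) ((n : ℝ)⁻¹ • (Xᵀ *ᵥ (y - X *ᵥ betaGF X y t))) t :=
  stmt_0_general X y
end

section
/- Let A be a real symmetric positive semidefinite p×p matrix, t ≥ 0 and v ∈ ℝᵖ. Then ‖exp(−tA) v‖₂ ≤ ‖(I + tA)⁻¹ v‖₂. (This is the deterministic core of the statement that the squared bias of gradient flow at time t is at most the squared bias of ridge regression with tuning parameter λ = 1/t: the gradient flow bias vector is exp(−tΣ̂)β₀ and the ridge bias vector is (I + tΣ̂)⁻¹β₀.) -/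
/-!
Diagonalise `A = U D Uᵀ` with `U` orthogonal and `D ≥ 0`. Both `exp (-tA)` and `(I + tA)⁻¹` are
then functions of `A`, namely `U f(D) Uᵀ` with `f x = exp (-t x)` and `f x = (1 + t x)⁻¹`. Since
`U` is an isometry, both norms are computed in the eigenbasis, where the claim reduces to the
scalar inequality `exp (-x) ≤ (1 + x)⁻¹`, i.e. `1 + x ≤ exp x`, on each eigenvalue `x = t λᵢ ≥ 0`.
-/

open Matrix

/-- The Euclidean norm on `ℝᵖ`. -/
noncomputable def l2norm {p : ℕ} (v : Fin p → ℝ) : ℝ :=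
  Real.sqrt (∑ i, v i ^ 2)

theorem Real.exp_neg_le_inv_one_add {x : ℝ} (hx : -1 < x) : exp (-x) ≤ (1 + x)⁻¹ := by
  rw [exp_neg, inv_le_inv₀ (exp_pos x) (by linarith), add_comm]
  exact add_one_le_exp x

namespace Matrix

theorem IsHermitian.exp_smul_eq_cfc {n : Type*} [Fintype n] [DecidableEq n] {A : Matrix n n ℝ}
    (hA : A.IsHermitian) (s : ℝ) :
    NormedSpace.exp (s • A) = cfc (fun x => Real.exp (s * x)) A := by
  have hA' : IsSelfAdjoint A := hA
  have hsA : s • A = cfc (fun x => s * x) A := by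
    rw [cfc_const_mul .., cfc_id' ℝ A]
  -- `NormedSpace.exp` does not depend on the norm; the operator norm makes matrices a C⋆-algebra.
  open scoped Matrix.Norms.L2Operator in
  rw [hsA, ← CFC.real_exp_eq_normedSpace_exp, ← cfc_comp' Real.exp (fun x => s * x) A]

theorem IsHermitian.inv_one_add_smul_eq_cfc {n 𝕜 : Type*} [Fintype n] [DecidableEq n] [RCLike 𝕜]
    {A : Matrix n n 𝕜} (hA : A.IsHermitian) {t : ℝ} (ht : ∀ x ∈ spectrum ℝ A, 1 + t * x ≠ 0) :
    (1 + t • A)⁻¹ = cfc (fun x => (1 + t * x)⁻¹) A := by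
  have hA' : IsSelfAdjoint A := hA
  rw [cfc_inv (fun x => 1 + t * x) A ht, nonsing_inv_eq_ringInverse, cfc_add .., cfc_const_one ℝ A,
    cfc_const_mul .., cfc_id' ℝ A]

variable {p : ℕ}

theorem l2norm_eq_sqrt_dotProduct (x : Fin p → ℝ) : l2norm x = Real.sqrt (x ⬝ᵥ x) := by
  simp only [l2norm, dotProduct, sq]

theorem l2norm_le_l2norm_of_abs_le {x y : Fin p → ℝ} (h : ∀ i, |x i| ≤ |y i|) :
    l2norm x ≤ l2norm y :=
  Real.sqrt_le_sqrt <| Finset.sum_le_sum fun i _ => sq_le_sq.mpr (h i)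

theorem l2norm_mulVec_of_mem_unitaryGroup {U : Matrix (Fin p) (Fin p) ℝ}
    (hU : U ∈ unitaryGroup (Fin p) ℝ) (x : Fin p → ℝ) : l2norm (U *ᵥ x) = l2norm x := by
  have hUU : Uᵀ * U = 1 := by
    rw [← conjTranspose_eq_transpose_of_trivial, ← star_eq_conjTranspose]
    exact mem_unitaryGroup_iff'.mp hU
  rw [l2norm_eq_sqrt_dotProduct, l2norm_eq_sqrt_dotProduct, dotProduct_mulVec, ← mulVec_transpose,
    mulVec_mulVec, hUU, one_mulVec]

theorem IsHermitian.l2norm_cfc_mulVec {A : Matrix (Fin p) (Fin p) ℝ} (hA : A.IsHermitian)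
    (f : ℝ → ℝ) (v : Fin p → ℝ) :
    l2norm (cfc f A *ᵥ v) = l2norm fun i =>
      f (hA.eigenvalues i) * ((star hA.eigenvectorUnitary : Matrix (Fin p) (Fin p) ℝ) *ᵥ v) i := by
  rw [cfc_eq hA, IsHermitian.cfc, Unitary.conjStarAlgAut_apply, ← mulVec_mulVec, ← mulVec_mulVec,
    l2norm_mulVec_of_mem_unitaryGroup hA.eigenvectorUnitary.2]
  congr 1
  ext i
  simp [mulVec_diagonal]

theorem IsHermitian.l2norm_cfc_mulVec_le {A : Matrix (Fin p) (Fin p) ℝ} (hA : A.IsHermitian)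
    {f g : ℝ → ℝ} (hfg : ∀ x ∈ spectrum ℝ A, |f x| ≤ |g x|) (v : Fin p → ℝ) :
    l2norm (cfc f A *ᵥ v) ≤ l2norm (cfc g A *ᵥ v) := by
  rw [hA.l2norm_cfc_mulVec, hA.l2norm_cfc_mulVec]
  refine l2norm_le_l2norm_of_abs_le fun i => ?_
  rw [abs_mul, abs_mul]
  exact mul_le_mul_of_nonneg_right (hfg _ (hA.eigenvalues_mem_spectrum_real i)) (abs_nonneg _)

end Matrix

/-- For a real symmetric positive semidefinite `p × p` matrix `A`, `t ≥ 0`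
and `v ∈ ℝᵖ`, `‖exp(−tA) v‖₂ ≤ ‖(I + tA)⁻¹ v‖₂`. -/
theorem stmt_2 {p : ℕ} (A : Matrix (Fin p) (Fin p) ℝ) (hA : A.PosSemidef)
    (t : ℝ) (ht : 0 ≤ t) (v : Fin p → ℝ) :
    l2norm ((NormedSpace.exp (-(t • A))) *ᵥ v) ≤
      l2norm (((1 : Matrix (Fin p) (Fin p) ℝ) + t • A)⁻¹ *ᵥ v) := by
  have hspec : ∀ x ∈ spectrum ℝ A, 0 ≤ t * x := by
    rw [hA.isHermitian.spectrum_real_eq_range_eigenvalues]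
    rintro - ⟨i, rfl⟩
    exact mul_nonneg ht (hA.eigenvalues_nonneg i)
  rw [← neg_smul, hA.isHermitian.exp_smul_eq_cfc,
    hA.isHermitian.inv_one_add_smul_eq_cfc fun x hx => by linarith [hspec x hx]]
  refine hA.isHermitian.l2norm_cfc_mulVec_le (fun x hx => ?_) v
  have hpos : 0 < 1 + t * x := by linarith [hspec x hx]
  rw [abs_of_pos (Real.exp_pos _), abs_of_pos (inv_pos.mpr hpos), neg_mul]
  exact Real.exp_neg_le_inv_one_add (by linarith)
end

section
/- Fix y ∈ ℝⁿ, a real n×p matrix X, β ∈ ℝᵖ, and reals ε > 0, m > 0. Let h(β) = y − Xβ be the residual vector, F(β) = diag(h(β))² the diagonal matrix of squared residuals, Σ̂ = XᵀX/n, L = λ_max(Σ̂), and Q = (ε/(nm)) Xᵀ F(β) X. Then tr[(Q^{1/2} − ((ε/m)·Σ̂)^{1/2})²] ≤ (4 L p² ε/m) · Σ_{i=1}^n |h(β)_i² − 1|, where M^{1/2} denotes the positive semidefinite square root of a positive semidefinite matrix M. -/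
/-!
The difference `D = √Q - √S` is symmetric, so `tr D² = ∑ μᵢ²` over its eigenvalues `μᵢ`.
If `D v = μ v` with `‖v‖ = 1` and `μ ≥ 0`, expanding `‖√Q v‖² = ‖√S v + μ v‖²` gives
`⟪v, (Q - S) v⟫ = 2μ ⟪v, √S v⟫ + μ² ≥ μ²`; exchanging `Q` and `S` handles `μ < 0`, so
`μ² ≤ |⟪v, (Q - S) v⟫|`. Since `Q - S = (ε/(nm)) Xᵀ diag(hᵢ² - 1) X`, writing `w = X v`,
`|⟪v, (Q - S) v⟫| ≤ (ε/(nm)) ∑ |hᵢ² - 1| wᵢ² ≤ (ε/(nm)) ‖w‖² ∑ |hᵢ² - 1| ≤ (ε/m) L ∑ |hᵢ² - 1|`,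
because `‖w‖²/n = ⟪v, Σ̂ v⟫ ≤ L`. Summing over the `p` eigenvalues gives `p (ε/m) L ∑ |hᵢ² - 1|`.
-/

open Matrix

section
open scoped ComplexOrder

/-- The positive semidefinite square root of a positive semidefinite matrix (as in the older Mathlib,
where it was `Matrix.PosSemidef.sqrt`; it has since been removed). -/
noncomputable def Matrix.PosSemidef.sqrt {n 𝕜 : Type*} [Fintype n] [DecidableEq n] [RCLike 𝕜]
    {A : Matrix n n 𝕜} (hA : A.PosSemidef) : Matrix n n 𝕜 :=
  hA.1.eigenvectorUnitary.1 * diagonal ((↑) ∘ (√·) ∘ hA.1.eigenvalues) *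
    (star hA.1.eigenvectorUnitary : Matrix n n 𝕜)

end

namespace Matrix

section RCLike

open scoped ComplexOrder

variable {n 𝕜 : Type*} [Fintype n] [DecidableEq n] [RCLike 𝕜]

theorem IsHermitian.trace_pow {A : Matrix n n 𝕜} (hA : A.IsHermitian) (k : ℕ) :
    (A ^ k).trace = ∑ i, (hA.eigenvalues i : 𝕜) ^ k := by
  conv_lhs => rw [hA.spectral_theorem, ← map_pow, Unitary.conjStarAlgAut_apply, trace_mul_cycle,
    Unitary.coe_star_mul_self, one_mul, diagonal_pow, trace_diagonal]
  rfl

theorem PosSemidef.posSemidef_sqrt {A : Matrix n n 𝕜} (hA : A.PosSemidef) :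
    hA.sqrt.PosSemidef := by
  have hd : (diagonal ((↑) ∘ (√·) ∘ hA.1.eigenvalues) : Matrix n n 𝕜).PosSemidef :=
    posSemidef_diagonal_iff.mpr fun i => by simp [Real.sqrt_nonneg]
  simpa [PosSemidef.sqrt, star_eq_conjTranspose] using
    hd.mul_mul_conjTranspose_same (hA.1.eigenvectorUnitary : Matrix n n 𝕜)

theorem PosSemidef.sqrt_mul_self {A : Matrix n n 𝕜} (hA : A.PosSemidef) :
    hA.sqrt * hA.sqrt = A := by
  have hsqrt : hA.sqrt = Unitary.conjStarAlgAut 𝕜 _ hA.1.eigenvectorUnitary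
      (diagonal ((↑) ∘ (√·) ∘ hA.1.eigenvalues)) := rfl
  conv_rhs => rw [hA.1.spectral_theorem]
  rw [hsqrt, ← map_mul, diagonal_mul_diagonal]
  congr 2
  funext i
  simp [← RCLike.ofReal_mul, Real.mul_self_sqrt (hA.eigenvalues_nonneg i)]

end RCLike

section Real

variable {m n : Type*} [Fintype m] [Fintype n]

theorem IsHermitian.dotProduct_mul_self_mulVec {A : Matrix n n ℝ} (hA : A.IsHermitian)
    (v : n → ℝ) : v ⬝ᵥ ((A * A) *ᵥ v) = (A *ᵥ v) ⬝ᵥ (A *ᵥ v) := by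
  have hAt : Aᵀ = A := by rw [← conjTranspose_eq_transpose_of_trivial, hA.eq]
  rw [← mulVec_mulVec, dotProduct_mulVec, ← mulVec_transpose, hAt]

theorem sq_le_dotProduct_mul_self_sub_mul_self_mulVec_of_nonneg {A B : Matrix n n ℝ}
    (hA : A.IsHermitian) (hB : B.PosSemidef) {v : n → ℝ} (hv : v ⬝ᵥ v = 1) {μ : ℝ}
    (hμ : (A - B) *ᵥ v = μ • v) (hμ0 : 0 ≤ μ) :
    μ ^ 2 ≤ v ⬝ᵥ ((A * A - B * B) *ᵥ v) := by
  have hAv : A *ᵥ v = B *ᵥ v + μ • v := by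
    rw [← hμ, sub_mulVec, add_sub_cancel]
  have hexpand : v ⬝ᵥ ((A * A - B * B) *ᵥ v) = 2 * μ * (v ⬝ᵥ (B *ᵥ v)) + μ ^ 2 := by
    rw [sub_mulVec, dotProduct_sub, hA.dotProduct_mul_self_mulVec, hB.1.dotProduct_mul_self_mulVec,
      hAv]
    simp only [dotProduct_add, add_dotProduct, dotProduct_smul, smul_dotProduct, smul_eq_mul, hv,
      dotProduct_comm (B *ᵥ v) v]
    ring
  have hBv : 0 ≤ v ⬝ᵥ (B *ᵥ v) := by simpa using hB.dotProduct_mulVec_nonneg v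
  rw [hexpand]
  nlinarith

theorem sq_le_abs_dotProduct_mul_self_sub_mul_self_mulVec {A B : Matrix n n ℝ}
    (hA : A.PosSemidef) (hB : B.PosSemidef) {v : n → ℝ} (hv : v ⬝ᵥ v = 1) {μ : ℝ}
    (hμ : (A - B) *ᵥ v = μ • v) :
    μ ^ 2 ≤ |v ⬝ᵥ ((A * A - B * B) *ᵥ v)| := by
  rcases le_or_gt 0 μ with hμ0 | hμ0
  · exact (sq_le_dotProduct_mul_self_sub_mul_self_mulVec_of_nonneg hA.1 hB hv hμ hμ0).trans
      (le_abs_self _)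
  · have hμ' : (B - A) *ᵥ v = (-μ) • v := by rw [← neg_sub, neg_mulVec, hμ, neg_smul]
    have := sq_le_dotProduct_mul_self_sub_mul_self_mulVec_of_nonneg hB.1 hA hv hμ' (by linarith)
    rw [neg_sq, ← neg_sub, neg_mulVec, dotProduct_neg] at this
    exact this.trans (neg_le_abs _)

open scoped MatrixOrder in
theorem IsHermitian.dotProduct_mulVec_le_of_spectrum_le [DecidableEq n] {A : Matrix n n ℝ}
    (hA : A.IsHermitian) {L : ℝ} (hL : ∀ s ∈ spectrum ℝ A, s ≤ L) (v : n → ℝ) :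
    v ⬝ᵥ (A *ᵥ v) ≤ L * (v ⬝ᵥ v) := by
  have hle := (Matrix.le_iff.mp (le_algebraMap_of_spectrum_le hL hA)).dotProduct_mulVec_nonneg v
  simp only [Algebra.algebraMap_eq_smul_one, star_trivial, sub_mulVec, smul_mulVec, one_mulVec,
    dotProduct_sub, dotProduct_smul, smul_eq_mul, sub_nonneg] at hle
  exact hle

theorem abs_dotProduct_transpose_mul_diagonal_mul_mulVec_le [DecidableEq m] (X : Matrix m n ℝ)
    (d : m → ℝ) (v : n → ℝ) :
    |v ⬝ᵥ ((Xᵀ * diagonal d * X) *ᵥ v)| ≤ (∑ i, |d i|) * (v ⬝ᵥ ((Xᵀ * X) *ᵥ v)) := by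
  set w := X *ᵥ v
  have hgram : ∀ M : Matrix m m ℝ, v ⬝ᵥ ((Xᵀ * M * X) *ᵥ v) = w ⬝ᵥ (M *ᵥ w) := by
    intro M
    rw [← mulVec_mulVec, ← mulVec_mulVec, dotProduct_mulVec, vecMul_transpose]
  have hw : ∀ i, w i ^ 2 ≤ w ⬝ᵥ w := fun i => by
    simpa [dotProduct, sq] using
      Finset.single_le_sum (fun j _ => mul_self_nonneg (w j)) (Finset.mem_univ i)
  rw [hgram, ← Matrix.mul_one Xᵀ, hgram, one_mulVec, Finset.sum_mul]
  calc |w ⬝ᵥ (diagonal d *ᵥ w)| = |∑ i, d i * w i ^ 2| := by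
        simp only [mulVec_diagonal, dotProduct]
        exact congrArg _ (Finset.sum_congr rfl fun i _ => by ring)
    _ ≤ ∑ i, |d i * w i ^ 2| := Finset.abs_sum_le_sum_abs _ _
    _ ≤ ∑ i, |d i| * (w ⬝ᵥ w) := Finset.sum_le_sum fun i _ => by
        rw [abs_mul, abs_of_nonneg (sq_nonneg (w i))]
        exact mul_le_mul_of_nonneg_left (hw i) (abs_nonneg _)

theorem abs_dotProduct_diagonal_gram_sub_gram_mulVec_le [DecidableEq m] [DecidableEq n]
    (X : Matrix m n ℝ) (d : m → ℝ) {c N L : ℝ} (hc : 0 ≤ c) (hN : 0 ≤ N)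
    (hL : ∀ s ∈ spectrum ℝ (N⁻¹ • (Xᵀ * X)), s ≤ L) {v : n → ℝ} (hv : v ⬝ᵥ v = 1) :
    |v ⬝ᵥ (((c / N) • (Xᵀ * diagonal d * X) - c • (N⁻¹ • (Xᵀ * X))) *ᵥ v)| ≤
      c * (L * ∑ i, |d i - 1|) := by
  have hCov : (N⁻¹ • (Xᵀ * X)).PosSemidef := by
    simpa using (posSemidef_conjTranspose_mul_self X).smul (inv_nonneg.mpr hN)
  have hdiff : (c / N) • (Xᵀ * diagonal d * X) - c • (N⁻¹ • (Xᵀ * X)) =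
      c • (N⁻¹ • (Xᵀ * diagonal (fun i => d i - 1) * X)) := by
    have hdiag : diagonal (fun i => d i - 1) = diagonal d - 1 := by
      rw [← diagonal_one, diagonal_sub]
    rw [hdiag, Matrix.mul_sub, Matrix.sub_mul, Matrix.mul_one, smul_sub, smul_sub, smul_smul,
      smul_smul, div_eq_mul_inv]
  have hgram := abs_dotProduct_transpose_mul_diagonal_mul_mulVec_le X (fun i => d i - 1) v
  have hray := hCov.1.dotProduct_mulVec_le_of_spectrum_le hL v
  rw [hv, mul_one, smul_mulVec, dotProduct_smul, smul_eq_mul] at hray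
  rw [hdiff, smul_mulVec, smul_mulVec, dotProduct_smul, dotProduct_smul, smul_eq_mul, smul_eq_mul,
    abs_mul, abs_mul, abs_of_nonneg hc, abs_of_nonneg (inv_nonneg.mpr hN)]
  refine mul_le_mul_of_nonneg_left ?_ hc
  calc N⁻¹ * |v ⬝ᵥ ((Xᵀ * diagonal (fun i => d i - 1) * X) *ᵥ v)|
      ≤ N⁻¹ * ((∑ i, |d i - 1|) * (v ⬝ᵥ ((Xᵀ * X) *ᵥ v))) := by gcongr
    _ = (∑ i, |d i - 1|) * (N⁻¹ * (v ⬝ᵥ ((Xᵀ * X) *ᵥ v))) := by ring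
    _ ≤ L * ∑ i, |d i - 1| := by rw [mul_comm L]; gcongr

theorem PosSemidef.trace_sqrt_sub_sqrt_sq_le [DecidableEq n] {A B : Matrix n n ℝ}
    (hA : A.PosSemidef) (hB : B.PosSemidef) {c : ℝ}
    (hc : ∀ v : n → ℝ, v ⬝ᵥ v = 1 → |v ⬝ᵥ ((A - B) *ᵥ v)| ≤ c) :
    ((hA.sqrt - hB.sqrt) ^ 2).trace ≤ Fintype.card n * c := by
  have hD : (hA.sqrt - hB.sqrt).IsHermitian := hA.posSemidef_sqrt.1.sub hB.posSemidef_sqrt.1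
  rw [hD.trace_pow]
  refine (Finset.sum_le_sum (g := fun _ => c) fun i _ => ?_).trans_eq (by simp)
  set v : n → ℝ := ⇑(hD.eigenvectorBasis i)
  have hv : v ⬝ᵥ v = 1 := by
    have := hD.eigenvectorBasis.inner_eq_one i
    rwa [EuclideanSpace.inner_eq_star_dotProduct, star_trivial, dotProduct_comm] at this
  have hμ := sq_le_abs_dotProduct_mul_self_sub_mul_self_mulVec hA.posSemidef_sqrt
    hB.posSemidef_sqrt hv (hD.mulVec_eigenvectorBasis i)
  rw [hA.sqrt_mul_self, hB.sqrt_mul_self] at hμ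
  exact hμ.trans (hc v hv)

end Real

end Matrix

/-- with `h(β) = y − Xβ`, `F(β) = diag(h(β))²`, `Σ̂ = XᵀX/n`,
`L = λ_max(Σ̂)` and `Q = (ε/(nm)) Xᵀ F(β) X`, we have
`tr[(Q^{1/2} − ((ε/m)Σ̂)^{1/2})²] ≤ (4 L p² ε/m) · Σᵢ |h(β)ᵢ² − 1|`. -/
theorem stmt_7 {n p : ℕ} (y : Fin n → ℝ) (X : Matrix (Fin n) (Fin p) ℝ)
    (β : Fin p → ℝ) (ε m : ℝ) (hε : 0 < ε) (hm : 0 < m) (L : ℝ)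
    (hL : L ∈ spectrum ℝ ((n : ℝ)⁻¹ • (Xᵀ * X)) ∧
      ∀ s ∈ spectrum ℝ ((n : ℝ)⁻¹ • (Xᵀ * X)), s ≤ L)
    (hQ : ((ε / ((n : ℝ) * m)) •
        (Xᵀ * Matrix.diagonal (fun i => (y i - (X *ᵥ β) i) ^ 2) * X)).PosSemidef)
    (hS : ((ε / m) • ((n : ℝ)⁻¹ • (Xᵀ * X))).PosSemidef) :
    ((hQ.sqrt - hS.sqrt) ^ 2).trace ≤
      4 * L * (p : ℝ) ^ 2 * ε / m * ∑ i, |(y i - (X *ᵥ β) i) ^ 2 - 1| := by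
  have hCov : ((n : ℝ)⁻¹ • (Xᵀ * X)).PosSemidef := by
    simpa using (posSemidef_conjTranspose_mul_self X).smul (inv_nonneg.mpr n.cast_nonneg)
  have hL0 : 0 ≤ L := (posSemidef_iff_isHermitian_and_spectrum_nonneg.mp hCov).2 hL.1
  have hp : (p : ℝ) ≤ p ^ 2 := by exact_mod_cast Nat.le_self_pow two_ne_zero p
  set T := ∑ i, |(y i - (X *ᵥ β) i) ^ 2 - 1|
  calc ((hQ.sqrt - hS.sqrt) ^ 2).trace ≤ p * (ε / m * (L * T)) := by
        refine (hQ.trace_sqrt_sub_sqrt_sq_le hS (c := ε / m * (L * T)) fun v hv => ?_).trans_eq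
          (by simp)
        rw [div_mul_eq_div_div_swap]
        exact abs_dotProduct_diagonal_gram_sub_gram_mulVec_le X _ (div_pos hε hm).le
          n.cast_nonneg hL.2 hv
    _ ≤ 4 * p ^ 2 * (ε / m * (L * T)) := by gcongr; nlinarith
    _ = 4 * L * p ^ 2 * ε / m * T := by ring
end

section
/- Fix y ∈ ℝⁿ, a real n×p matrix X with rows x₁ᵀ,…,xₙᵀ, ε > 0 and a positive integer m, and let β⁽ᵏ⁾ be the mini-batch SGD iterates with i.i.d. uniform with-replacement mini-batches of size m, started at β⁽⁰⁾ = 0. Then for every k ≥ 1 the covariance matrix of β⁽ᵏ⁾ satisfies the recursion Cov(β⁽ᵏ⁾) = (I − εΣ̂) Cov(β⁽ᵏ⁻¹⁾) (I − εΣ̂) + (ε²/(nm)) E[ Xᵀ( F(β⁽ᵏ⁻¹⁾) − h(β⁽ᵏ⁻¹⁾)h(β⁽ᵏ⁻¹⁾)ᵀ/n ) X ], where Σ̂ = XᵀX/n, h(β) = y − Xβ and F(β) = diag(h(β))². -/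
/-!
One step reads `β⁺ = (I − εΣ̂) β + (ε/n) Xᵀy + (ε/m) Σⱼ ξ(β, Iⱼ)`, where `ξ(β, a) = gₐ(β) − ḡ(β)`
is the centred per-sample gradient `gₐ(β) = hₐ(β) xₐ`. The batch of step `k` is uniform and
independent of `β⁽ᵏ⁾`, which is a function of the earlier batches, so we may average over the
batch first. Then the noise `(1/m) Σⱼ ξ(β, Iⱼ)` has mean zero, hence is uncorrelated with the
affine part, and, its `m` draws being independent, has second moment `(1/(nm)) Σₐ ξₐ ξₐᵀ`; this
scatter matrix equals `Xᵀ(F − hhᵀ/n)X`. The affine part contributes `(I − εΣ̂) Cov(β⁽ᵏ⁾) (I − εΣ̂)`.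
-/

open Matrix MeasureTheory ProbabilityTheory

/-- The covariance matrix `E[(g − Eg)(g − Eg)ᵀ]` of a random vector `g : Ω → ℝᵖ`. -/
noncomputable def vecCov {Ω : Type*} [MeasurableSpace Ω] (μ : Measure Ω) {p : ℕ}
    (g : Ω → Fin p → ℝ) : Matrix (Fin p) (Fin p) ℝ :=
  Matrix.of fun i j =>
    ∫ ω, (g ω i - ∫ ω', g ω' i ∂μ) * (g ω j - ∫ ω', g ω' j ∂μ) ∂μ

section Batch

variable {κ M : Type*} [Fintype κ] [AddCommMonoid M]

theorem Fintype.sum_fun_fin_succ {m : ℕ} (F : (Fin (m + 1) → κ) → M) :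
    ∑ s, F s = ∑ a, ∑ s, F (Fin.cons a s) := by
  rw [← (Fin.consEquiv fun _ => κ).sum_comp, Fintype.sum_prod_type]
  rfl

theorem sum_fun_sum_apply_eq_zero {φ : κ → M} (hφ : ∑ a, φ a = 0) :
    ∀ m : ℕ, ∑ s : Fin m → κ, ∑ j, φ (s j) = 0
  | 0 => by simp
  | m + 1 => by
    simp only [Fintype.sum_fun_fin_succ, Fin.sum_univ_succ, Fin.cons_zero, Fin.cons_succ,
      Finset.sum_add_distrib, sum_fun_sum_apply_eq_zero hφ m, Finset.sum_const_zero, add_zero]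
    rw [Finset.sum_comm]
    simp [hφ]

theorem sum_fun_sum_apply_mul_sum_apply {φ ψ : κ → ℝ} (hφ : ∑ a, φ a = 0)
    (hψ : ∑ a, ψ a = 0) : ∀ m : ℕ, ∑ s : Fin m → κ, (∑ j, φ (s j)) * ∑ j, ψ (s j) =
      m * Fintype.card κ ^ (m - 1) * ∑ a, φ a * ψ a
  | 0 => by simp
  | m + 1 => by
    have hΦ := sum_fun_sum_apply_eq_zero hφ m
    have hΨ := sum_fun_sum_apply_eq_zero hψ m
    have ih := sum_fun_sum_apply_mul_sum_apply hφ hψ m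
    simp only [Fintype.sum_fun_fin_succ, Fin.sum_univ_succ, Fin.cons_zero, Fin.cons_succ,
      add_mul, mul_add, Finset.sum_add_distrib, ← Finset.mul_sum, ← Finset.sum_mul, hΦ, hΨ, ih,
      mul_zero, zero_mul, add_zero, Finset.sum_const, Finset.card_univ, nsmul_eq_mul]
    rcases m with _ | m
    · simp
    · simp only [Fintype.card_fun, Fintype.card_fin, mul_left_comm (φ _), ← Finset.mul_sum]
      push_cast
      ring

end Batch

section SGD

variable {n p : ℕ} (X : Matrix (Fin n) (Fin p) ℝ) (y : Fin n → ℝ) (ε : ℝ)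

noncomputable def sampleGrad (b : Fin p → ℝ) (a : Fin n) : Fin p → ℝ :=
  (y a - ∑ l, X a l * b l) • fun l => X a l

noncomputable def sgdStep (m : ℕ) (b : Fin p → ℝ) (s : Fin m → Fin n) : Fin p → ℝ :=
  b + (ε / m) • ∑ j, sampleGrad X y b (s j)

noncomputable def sgdIter (m : ℕ) : (k : ℕ) → (Fin k → Fin m → Fin n) → Fin p → ℝ
  | 0, _ => 0
  | k + 1, t => sgdStep X y ε m (sgdIter m k (Fin.init t)) (t (Fin.last k))

noncomputable def gdStep (b : Fin p → ℝ) : Fin p → ℝ :=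
  b + (ε / n) • ∑ a, sampleGrad X y b a

noncomputable def gradNoise (b : Fin p → ℝ) (a : Fin n) : Fin p → ℝ :=
  sampleGrad X y b a - (n : ℝ)⁻¹ • ∑ a', sampleGrad X y b a'

noncomputable def gradScatter (b : Fin p → ℝ) : Matrix (Fin p) (Fin p) ℝ :=
  Xᵀ * (diagonal (fun l => (y l - (X *ᵥ b) l) ^ 2) -
    (n : ℝ)⁻¹ • vecMulVec (y - X *ᵥ b) (y - X *ᵥ b)) * X

theorem sum_sampleGrad (b : Fin p → ℝ) : ∑ a, sampleGrad X y b a = Xᵀ *ᵥ (y - X *ᵥ b) := by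
  ext l
  simp [sampleGrad, mulVec, dotProduct, Finset.sum_apply, mul_comm]

theorem gdStep_eq_mulVec_add (b : Fin p → ℝ) :
    gdStep X y ε b = (1 - ε • ((n : ℝ)⁻¹ • (Xᵀ * X))) *ᵥ b + (ε / n) • (Xᵀ *ᵥ y) := by
  rw [gdStep, sum_sampleGrad, mulVec_sub, sub_mulVec, one_mulVec, smul_mulVec, smul_mulVec,
    ← mulVec_mulVec]
  module

theorem sum_gradNoise [NeZero n] (b : Fin p → ℝ) : ∑ a, gradNoise X y b a = 0 := by
  simp only [gradNoise, Finset.sum_sub_distrib, Finset.sum_const, Finset.card_univ,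
    Fintype.card_fin, ← Nat.cast_smul_eq_nsmul ℝ, smul_smul,
    mul_inv_cancel₀ ((Nat.cast_ne_zero (R := ℝ)).2 (NeZero.ne n)), one_smul, sub_self]

theorem sgdStep_eq_gdStep_add {m : ℕ} [NeZero m] (b : Fin p → ℝ) (s : Fin m → Fin n) :
    sgdStep X y ε m b s = gdStep X y ε b + (ε / m) • ∑ j, gradNoise X y b (s j) := by
  simp only [sgdStep, gdStep, gradNoise, Finset.sum_sub_distrib, Finset.sum_const,
    Finset.card_univ, Fintype.card_fin, ← Nat.cast_smul_eq_nsmul ℝ, smul_smul, ← div_eq_mul_inv]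
  rw [smul_sub, smul_smul, mul_div_assoc',
    div_mul_cancel₀ ε ((Nat.cast_ne_zero (R := ℝ)).2 (NeZero.ne m))]
  abel

theorem sum_gradNoise_mul_gradNoise [NeZero n] (b : Fin p → ℝ) (i j : Fin p) :
    ∑ a, gradNoise X y b a i * gradNoise X y b a j = gradScatter X y b i j := by
  set h := y - X *ᵥ b
  have hw : ∀ l, (Xᵀ *ᵥ h) l = ∑ a, h a * X a l := fun l => by
    simp only [mulVec, dotProduct, transpose_apply, mul_comm]
  have hnoise : ∀ a l, gradNoise X y b a l = h a * X a l - (n : ℝ)⁻¹ * (Xᵀ *ᵥ h) l :=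
    fun a l => by
    rw [gradNoise, sum_sampleGrad]
    rfl
  have hscatter : gradScatter X y b i j =
      ∑ a, h a ^ 2 * X a i * X a j - (n : ℝ)⁻¹ * (Xᵀ *ᵥ h) i * (Xᵀ *ᵥ h) j := by
    rw [gradScatter, Matrix.mul_sub, Matrix.sub_mul, Matrix.mul_smul, Matrix.smul_mul,
      mul_vecMulVec, vecMulVec_mul, ← mulVec_transpose]
    simp only [Matrix.sub_apply, Matrix.smul_apply, vecMulVec_apply, mul_apply, diagonal_apply,
      mul_ite, mul_zero, Finset.sum_ite_eq', Finset.mem_univ, if_true, transpose_apply, smul_eq_mul]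
    congr 1
    · exact Finset.sum_congr rfl fun a _ => by simp only [h, Pi.sub_apply]; ring
    · ring
  rw [hscatter]
  simp only [hnoise, sub_mul, mul_sub, Finset.sum_sub_distrib]
  simp only [← Finset.mul_sum, ← Finset.sum_mul, ← hw, Finset.sum_const, Finset.card_univ,
    Fintype.card_fin, nsmul_eq_mul]
  field_simp
  ring

theorem average_sgdStep {m : ℕ} [NeZero n] [NeZero m] (b : Fin p → ℝ) (i : Fin p) :
    ((n : ℝ) ^ m)⁻¹ * ∑ s : Fin m → Fin n, sgdStep X y ε m b s i = gdStep X y ε b i := by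
  have hφ : ∑ a, gradNoise X y b a i = 0 := by
    rw [← Finset.sum_apply, sum_gradNoise]; rfl
  simp only [sgdStep_eq_gdStep_add, Pi.add_apply, Pi.smul_apply, Finset.sum_apply, smul_eq_mul,
    Finset.sum_add_distrib, ← Finset.mul_sum, sum_fun_sum_apply_eq_zero hφ, Finset.sum_const,
    Finset.card_univ, Fintype.card_fun, Fintype.card_fin, nsmul_eq_mul, mul_zero, add_zero]
  have : (n : ℝ) ≠ 0 := Nat.cast_ne_zero.2 (NeZero.ne n)
  push_cast
  field_simp

theorem average_sgdStep_sub_mul_sub {m : ℕ} [NeZero n] [NeZero m] (b : Fin p → ℝ)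
    (i j : Fin p) (cᵢ cⱼ : ℝ) :
    ((n : ℝ) ^ m)⁻¹ * ∑ s : Fin m → Fin n,
        (sgdStep X y ε m b s i - cᵢ) * (sgdStep X y ε m b s j - cⱼ) =
      (gdStep X y ε b i - cᵢ) * (gdStep X y ε b j - cⱼ) +
        ε ^ 2 / (n * m) * gradScatter X y b i j := by
  have hφ : ∀ l, ∑ a, gradNoise X y b a l = 0 := fun l => by
    rw [← Finset.sum_apply, sum_gradNoise]; rfl
  have expand : ∀ s : Fin m → Fin n,
      (sgdStep X y ε m b s i - cᵢ) * (sgdStep X y ε m b s j - cⱼ) =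
        (gdStep X y ε b i - cᵢ) * (gdStep X y ε b j - cⱼ) +
        ε / m * (gdStep X y ε b j - cⱼ) * ∑ k, gradNoise X y b (s k) i +
        ε / m * (gdStep X y ε b i - cᵢ) * ∑ k, gradNoise X y b (s k) j +
        (ε / m) ^ 2 * ((∑ k, gradNoise X y b (s k) i) * ∑ k, gradNoise X y b (s k) j) := by
    intro s
    simp only [sgdStep_eq_gdStep_add, Pi.add_apply, Pi.smul_apply, Finset.sum_apply, smul_eq_mul]
    ring
  simp only [expand, Finset.sum_add_distrib, ← Finset.mul_sum, sum_fun_sum_apply_eq_zero (hφ _),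
    sum_fun_sum_apply_mul_sum_apply (hφ i) (hφ j), sum_gradNoise_mul_gradNoise, Finset.sum_const,
    Finset.card_univ, Fintype.card_fun, Fintype.card_fin, nsmul_eq_mul, mul_zero, add_zero]
  obtain ⟨m, rfl⟩ := Nat.exists_eq_add_one_of_ne_zero (NeZero.ne m)
  have : (n : ℝ) ≠ 0 := Nat.cast_ne_zero.2 (NeZero.ne n)
  push_cast
  field_simp
  ring

end SGD

section Probability

variable {Ω : Type*} [MeasurableSpace Ω] {μ : Measure Ω}

theorem vecCov_mulVec_add_const [IsProbabilityMeasure μ] {p q : ℕ} {g : Ω → Fin p → ℝ}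
    (hg : ∀ i, MemLp (fun ω => g ω i) 2 μ) (A : Matrix (Fin q) (Fin p) ℝ) (c : Fin q → ℝ) :
    vecCov μ (fun ω => A *ᵥ g ω + c) = A * vecCov μ g * Aᵀ := by
  have hAg : ∀ i l, MemLp (fun ω => A i l * g ω l) 2 μ := fun i l => (hg l).const_mul _
  have hAg_int : ∀ i, Integrable (fun ω => ∑ l, A i l * g ω l) μ := fun i =>
    (memLp_finsetSum _ fun l _ => hAg i l).integrable one_le_two
  ext i j
  change cov[fun ω => (A *ᵥ g ω) i + c i, fun ω => (A *ᵥ g ω) j + c j; μ] = _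
  simp only [mulVec, dotProduct]
  rw [covariance_add_const_left (hAg_int i), covariance_add_const_right (hAg_int j),
    covariance_fun_sum_fun_sum (hAg i) (hAg j)]
  simp only [covariance_const_mul_left, covariance_const_mul_right, mul_apply, transpose_apply,
    Finset.sum_mul]
  rw [Finset.sum_comm]
  exact Finset.sum_congr rfl fun _ _ => Finset.sum_congr rfl fun _ _ => by
    rw [show vecCov μ g _ _ = cov[_, _; μ] from rfl]; ring

theorem integral_comp_eq_integral_average [IsProbabilityMeasure μ] {α κ : Type*}
    [MeasurableSpace α] [Finite α] [MeasurableSingletonClass α] [Fintype κ] [MeasurableSpace κ]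
    [MeasurableSingletonClass κ]
    {U : Ω → α} {S : Ω → κ} (hU : Measurable U) (hS : Measurable S) (hUS : IndepFun U S μ)
    (hS_unif : ∀ s, μ (S ⁻¹' {s}) = (Fintype.card κ : ENNReal)⁻¹) (F : α → κ → ℝ) :
    ∫ ω, F (U ω) (S ω) ∂μ = ∫ ω, (Fintype.card κ : ℝ)⁻¹ * ∑ s, F (U ω) s ∂μ := by
  calc ∫ ω, F (U ω) (S ω) ∂μ = ∫ z, Function.uncurry F z ∂(μ.map fun ω => (U ω, S ω)) :=
        (integral_map (f := Function.uncurry F) (hU.prodMk hS).aemeasurable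
          (measurable_of_countable _).aestronglyMeasurable).symm
    _ = ∫ u, ∫ s, F u s ∂(μ.map S) ∂(μ.map U) := by
        rw [(indepFun_iff_map_prod_eq_prod_map_map hU.aemeasurable hS.aemeasurable).1 hUS,
          integral_prod _ Integrable.of_finite]
        rfl
    _ = ∫ u, (Fintype.card κ : ℝ)⁻¹ * ∑ s, F u s ∂(μ.map U) := by
        congr 1 with u
        rw [integral_fintype Integrable.of_finite, Finset.mul_sum]
        refine Finset.sum_congr rfl fun s _ => ?_
        rw [measureReal_def, Measure.map_apply hS (measurableSet_singleton s), hS_unif,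
          smul_eq_mul, ENNReal.toReal_inv, ENNReal.toReal_natCast]
    _ = _ := integral_map hU.aemeasurable (measurable_of_countable _).aestronglyMeasurable

theorem ProbabilityTheory.iIndepFun.measure_preimage_pi_singleton {ι κ : Type*} [Fintype ι]
    [DecidableEq ι] [Fintype κ] [MeasurableSpace κ] [MeasurableSingletonClass κ] {f : ι → Ω → κ}
    (hf : iIndepFun f μ) (hunif : ∀ i a, μ (f i ⁻¹' {a}) = (Fintype.card κ : ENNReal)⁻¹)
    (s : ι → κ) : μ ((fun ω i => f i ω) ⁻¹' {s}) = (Fintype.card (ι → κ) : ENNReal)⁻¹ := by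
  have hset : (fun ω i => f i ω) ⁻¹' {s} = ⋂ i, f i ⁻¹' {s i} := by
    ext ω; simp [funext_iff]
  rw [hset, hf.meas_iInter fun i => ⟨{s i}, measurableSet_singleton _, rfl⟩]
  simp [hunif, ENNReal.inv_pow]

theorem ProbabilityTheory.iIndepFun.indepFun_fin_apply {ι β : Type*} [Fintype ι]
    [MeasurableSpace β] {I : ℕ → ι → Ω → β} (hI : iIndepFun (fun q : ℕ × ι => I q.1 q.2) μ)
    (hmeas : ∀ k j, Measurable (I k j)) (k : ℕ) :
    IndepFun (fun ω (i : Fin k) j => I i j ω) (fun ω j => I k j ω) μ := by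
  classical
  have h := hI.indepFun_finset (Finset.range k ×ˢ Finset.univ) ({k} ×ˢ Finset.univ)
    (by simp [Finset.disjoint_left]; omega) fun q => hmeas q.1 q.2
  exact h.comp (φ := fun t (i : Fin k) j => t ⟨(i, j), by simp⟩)
    (ψ := fun t j => t ⟨(k, j), by simp⟩)
    (measurable_pi_lambda _ fun _ => measurable_pi_lambda _ fun _ => measurable_pi_apply _)
    (measurable_pi_lambda _ fun _ => measurable_pi_apply _)

/-- The iterate `G ∘ U` is a function of finitely-valued data `U`, which makes every integrand
below integrable. -/
theorem vecCov_sgdStep [IsProbabilityMeasure μ] {n p m : ℕ} [NeZero n] [NeZero m]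
    (X : Matrix (Fin n) (Fin p) ℝ) (y : Fin n → ℝ) (ε : ℝ) {α : Type*} [MeasurableSpace α]
    [Finite α] [MeasurableSingletonClass α] {U : Ω → α} {S : Ω → Fin m → Fin n}
    (hU : Measurable U) (hS : Measurable S) (hUS : IndepFun U S μ)
    (hS_unif : ∀ s, μ (S ⁻¹' {s}) = (Fintype.card (Fin m → Fin n) : ENNReal)⁻¹)
    (G : α → Fin p → ℝ) :
    vecCov μ (fun ω => sgdStep X y ε m (G (U ω)) (S ω)) =
      (1 - ε • ((n : ℝ)⁻¹ • (Xᵀ * X))) * vecCov μ (fun ω => G (U ω)) *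
          (1 - ε • ((n : ℝ)⁻¹ • (Xᵀ * X))) +
        (ε ^ 2 / (n * m)) • of (fun i j => ∫ ω, gradScatter X y (G (U ω)) i j ∂μ) := by
  have hcomp_integrable : ∀ F : α → ℝ, Integrable (fun ω => F (U ω)) μ := fun _ =>
    Integrable.of_finite.comp_measurable hU
  have havg : ∀ F : α → (Fin m → Fin n) → ℝ,
      ∫ ω, F (U ω) (S ω) ∂μ = ∫ ω, ((n : ℝ) ^ m)⁻¹ * ∑ s, F (U ω) s ∂μ := fun F => by
    rw [integral_comp_eq_integral_average hU hS hUS hS_unif, Fintype.card_fun, Fintype.card_fin,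
      Fintype.card_fin]
    push_cast
    rfl
  have hmean : ∀ i, ∫ ω, sgdStep X y ε m (G (U ω)) (S ω) i ∂μ =
      ∫ ω, gdStep X y ε (G (U ω)) i ∂μ := fun i => by
    simp only [havg fun u s => sgdStep X y ε m (G u) s i, average_sgdStep]
  have hgd : vecCov μ (fun ω => gdStep X y ε (G (U ω))) =
      (1 - ε • ((n : ℝ)⁻¹ • (Xᵀ * X))) * vecCov μ (fun ω => G (U ω)) *
        (1 - ε • ((n : ℝ)⁻¹ • (Xᵀ * X))) := by
    simp only [gdStep_eq_mulVec_add]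
    rw [vecCov_mulVec_add_const (g := fun ω => G (U ω))
      fun l => MemLp.of_discrete.comp_of_map (g := fun u => G u l) hU.aemeasurable]
    simp [transpose_sub, transpose_smul, transpose_mul]
  ext i j
  rw [← hgd]
  simp only [vecCov, of_apply, Matrix.add_apply, Matrix.smul_apply, smul_eq_mul, hmean]
  simp only [havg fun u s => (sgdStep X y ε m (G u) s i - ∫ ω, gdStep X y ε (G (U ω)) i ∂μ) *
    (sgdStep X y ε m (G u) s j - ∫ ω, gdStep X y ε (G (U ω)) j ∂μ), average_sgdStep_sub_mul_sub]
  have hdrift := hcomp_integrable fun u =>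
    (gdStep X y ε (G u) i - ∫ ω, gdStep X y ε (G (U ω)) i ∂μ) *
    (gdStep X y ε (G u) j - ∫ ω, gdStep X y ε (G (U ω)) j ∂μ)
  have hscatter := (hcomp_integrable fun u => gradScatter X y (G u) i j).const_mul (ε ^ 2 / (n * m))
  exact (integral_add hdrift hscatter).trans (congrArg _ (integral_const_mul _ _))

end Probability

theorem stmt_10_general {Ω : Type*} [MeasurableSpace Ω] (μ : Measure Ω) [IsProbabilityMeasure μ]
    {n p m : ℕ} (hm : 0 < m)
    (X : Matrix (Fin n) (Fin p) ℝ) (y : Fin n → ℝ) (ε : ℝ)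
    (I : ℕ → Fin m → Ω → Fin n) (hmeas : ∀ k j, Measurable (I k j))
    (hunif : ∀ (k : ℕ) (j : Fin m) (a : Fin n), μ {ω | I k j ω = a} = (n : ENNReal)⁻¹)
    (hindep : iIndepFun
      (fun kj : ℕ × Fin m => I kj.1 kj.2) μ)
    (beta : ℕ → Ω → Fin p → ℝ)
    (hbeta0 : ∀ ω, beta 0 ω = 0)
    (hbeta : ∀ (k : ℕ) (ω : Ω),
      beta (k + 1) ω = beta k ω + (ε / m) •
        ∑ j : Fin m,
          (y (I k j ω) - ∑ l, X (I k j ω) l * beta k ω l) • fun l => X (I k j ω) l) :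
    ∀ k : ℕ,
      vecCov μ (beta (k + 1)) =
        ((1 : Matrix (Fin p) (Fin p) ℝ) - ε • ((n : ℝ)⁻¹ • (Xᵀ * X))) *
            vecCov μ (beta k) *
            ((1 : Matrix (Fin p) (Fin p) ℝ) - ε • ((n : ℝ)⁻¹ • (Xᵀ * X))) +
          (ε ^ 2 / ((n : ℝ) * m)) •
            Matrix.of (fun i j =>
              ∫ ω,
                (Xᵀ *
                  (Matrix.diagonal (fun l => (y l - (X *ᵥ beta k ω) l) ^ 2) -
                    (n : ℝ)⁻¹ •
                      Matrix.vecMulVec (y - X *ᵥ beta k ω) (y - X *ᵥ beta k ω)) * X) i j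
              ∂μ) := by
  have : NeZero m := ⟨hm.ne'⟩
  have : NeZero n := ⟨(I 0 ⟨0, hm⟩ (nonempty_of_isProbabilityMeasure μ).some).pos.ne'⟩
  have hiter : ∀ k ω, beta k ω = sgdIter X y ε m k (fun i j => I i j ω) := by
    intro k
    induction k with
    | zero => exact hbeta0
    | succ k ih => intro ω; rw [hbeta, ih]; rfl
  intro k
  rw [funext (hiter (k + 1)), funext (hiter k)]
  exact vecCov_sgdStep X y ε (U := fun ω (i : Fin k) j => I i j ω)
    (measurable_pi_lambda _ fun i => measurable_pi_lambda _ fun j => hmeas i j)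
    (measurable_pi_lambda _ fun j => hmeas k j) (hindep.indepFun_fin_apply hmeas k)
    ((hindep.precomp (g := fun j : Fin m => (k, j)) fun _ _ h => (Prod.mk.inj h).2)
      |>.measure_preimage_pi_singleton fun j a => by rw [Fintype.card_fin]; exact hunif k j a)
    (sgdIter X y ε m k)

/-- the covariance matrices of the mini-batch SGD iterates (i.i.d. uniform
with-replacement mini-batches, started at `0`) satisfy the recursion
`Cov(β⁽ᵏ⁾) = (I − εΣ̂) Cov(β⁽ᵏ⁻¹⁾) (I − εΣ̂) + (ε²/(nm)) E[Xᵀ(F(β⁽ᵏ⁻¹⁾) − h h ᵀ/n)X]`. -/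
theorem stmt_10 {Ω : Type*} [MeasurableSpace Ω] (μ : Measure Ω) [IsProbabilityMeasure μ]
    {n p m : ℕ} (hn : 0 < n) (hm : 0 < m)
    (X : Matrix (Fin n) (Fin p) ℝ) (y : Fin n → ℝ) (ε : ℝ) (hε : 0 < ε)
    (I : ℕ → Fin m → Ω → Fin n) (hmeas : ∀ k j, Measurable (I k j))
    (hunif : ∀ (k : ℕ) (j : Fin m) (a : Fin n), μ {ω | I k j ω = a} = (n : ENNReal)⁻¹)
    (hindep : iIndepFun
      (fun kj : ℕ × Fin m => I kj.1 kj.2) μ)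
    (beta : ℕ → Ω → Fin p → ℝ)
    (hbeta0 : ∀ ω, beta 0 ω = 0)
    (hbeta : ∀ (k : ℕ) (ω : Ω),
      beta (k + 1) ω = beta k ω + (ε / m) •
        ∑ j : Fin m,
          (y (I k j ω) - ∑ l, X (I k j ω) l * beta k ω l) • fun l => X (I k j ω) l) :
    ∀ k : ℕ,
      vecCov μ (beta (k + 1)) =
        ((1 : Matrix (Fin p) (Fin p) ℝ) - ε • ((n : ℝ)⁻¹ • (Xᵀ * X))) *
            vecCov μ (beta k) *
            ((1 : Matrix (Fin p) (Fin p) ℝ) - ε • ((n : ℝ)⁻¹ • (Xᵀ * X))) +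
          (ε ^ 2 / ((n : ℝ) * m)) •
            Matrix.of (fun i j =>
              ∫ ω,
                (Xᵀ *
                  (Matrix.diagonal (fun l => (y l - (X *ᵥ beta k ω) l) ^ 2) -
                    (n : ℝ)⁻¹ •
                      Matrix.vecMulVec (y - X *ᵥ beta k ω) (y - X *ᵥ beta k ω)) * X) i j
              ∂μ) :=
  stmt_10_general μ hm X y ε I hmeas hunif hindep beta hbeta0 hbeta
end

section
/- Let x₁,…,xₙ ∈ ℝ, not all zero, let m be a positive integer, let ε > 0 satisfy ε · max_i x_i² ≤ 1, and let β⁽⁰⁾ ∈ ℝ. Let (I_k)_{k≥1} be independent random m-tuples of i.i.d. indices uniform on {1,…,n}, set G_k = (1/m) Σ_{j=1}^m x_{I_k(j)}², and define the SGD iterates for the responseless least squares problem by β⁽ᵏ⁾ = (1 − ε G_k) β⁽ᵏ⁻¹⁾ = ∏_{j=1}^k (1 − ε G_j) · β⁽⁰⁾. Then β⁽ᵏ⁾ converges to 0 almost surely as k → ∞. -/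
/-!
Every factor `1 - ε G_k` lies in `[0, 1]` because `ε G_k ≤ ε maxᵢ xᵢ² ≤ 1`, so `|β⁽ᵏ⁾|` is
nonincreasing. Fix `i₀` with `x_{i₀} ≠ 0`. The events "the first index of batch `k` is `i₀`" are
independent with probability `1/n` each, so by the second Borel–Cantelli lemma almost surely they
occur infinitely often, and each time `|β|` shrinks by the factor `1 - ε x_{i₀}² / m < 1`. The limit
`L` of `|β⁽ᵏ⁾|` then satisfies `L ≤ (1 - ε x_{i₀}² / m) L`, hence `L = 0`.
-/

open MeasureTheory ProbabilityTheory Filter Topology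

lemma ProbabilityTheory.iIndepFun.iIndepSet_preimage {Ω ι : Type*} [MeasurableSpace Ω]
    {μ : Measure Ω} {β : ι → Type*} [∀ i, MeasurableSpace (β i)] {f : ∀ i, Ω → β i}
    (hf : iIndepFun f μ) {t : ∀ i, Set (β i)} (ht : ∀ i, MeasurableSet (t i)) :
    iIndepSet (fun i ↦ f i ⁻¹' t i) μ :=
  iIndep_of_iIndep_of_le hf fun i ↦
    MeasurableSpace.generateFrom_le fun _ hs ↦ hs ▸ ⟨t i, ht i, rfl⟩

lemma ProbabilityTheory.iIndepSet.ae_frequently_mem {Ω : Type*} [MeasurableSpace Ω]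
    {μ : Measure Ω} {s : ℕ → Set Ω} (hsm : ∀ k, MeasurableSet (s k)) (hs : iIndepSet s μ)
    (hs' : ∑' k, μ (s k) = ⊤) : ∀ᵐ ω ∂μ, ∃ᶠ k in atTop, ω ∈ s k := by
  have : IsProbabilityMeasure μ := hs.isProbabilityMeasure
  simp_rw [← mem_limsup_iff_frequently_mem]
  rw [ae_mem_iff_measure_eq (MeasurableSet.measurableSet_limsup hsm).nullMeasurableSet,
    measure_limsup_eq_one hsm hs hs', measure_univ]

lemma tendsto_zero_of_antitone_of_frequently_le_mul {v : ℕ → ℝ} {c : ℝ} (hv : Antitone v)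
    (hv0 : ∀ k, 0 ≤ v k) (hc : c < 1) (hfreq : ∃ᶠ k in atTop, v (k + 1) ≤ c * v k) :
    Tendsto v atTop (𝓝 0) := by
  obtain ⟨L, hL⟩ : ∃ L, Tendsto v atTop (𝓝 L) :=
    ⟨_, tendsto_atTop_ciInf hv ⟨0, Set.forall_mem_range.2 hv0⟩⟩
  have hL0 : 0 ≤ L := ge_of_tendsto' hL hv0
  have hLc : L ≤ c * L :=
    le_of_tendsto_of_tendsto_of_frequently (hL.comp (tendsto_add_atTop_nat 1))
      (hL.const_mul c) hfreq
  rwa [show L = 0 by nlinarith] at hL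

lemma tendsto_zero_of_succ_eq_mul_of_frequently_abs_le {u a : ℕ → ℝ} {c : ℝ}
    (hu : ∀ k, u (k + 1) = a k * u k) (ha : ∀ k, |a k| ≤ 1) (hc : c < 1)
    (hfreq : ∃ᶠ k in atTop, |a k| ≤ c) : Tendsto u atTop (𝓝 0) := by
  have habs : ∀ k, |u (k + 1)| = |a k| * |u k| := fun k ↦ by rw [hu, abs_mul]
  refine tendsto_zero_iff_abs_tendsto_zero u |>.2 <|
    tendsto_zero_of_antitone_of_frequently_le_mul (v := fun k ↦ |u k|) ?_
      (fun k ↦ abs_nonneg _) hc ?_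
  · exact antitone_nat_of_succ_le fun k ↦ by
      rw [habs]; exact mul_le_of_le_one_left (abs_nonneg _) (ha k)
  · exact hfreq.mono fun k hk ↦ by
      rw [habs]; exact mul_le_mul_of_nonneg_right hk (abs_nonneg _)

lemma abs_one_sub_mul_le_one_sub_mul {ε g g' B : ℝ} (hε : 0 ≤ ε) (hg' : g' ≤ g) (hgB : g ≤ B)
    (hεB : ε * B ≤ 1) : |1 - ε * g| ≤ 1 - ε * g' := by
  rw [abs_of_nonneg (by nlinarith)]
  nlinarith

lemma inv_mul_sum_sq_le_iSup {ι : Type*} [Finite ι] {m : ℕ} (hm : 0 < m) (x : ι → ℝ)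
    (s : Fin m → ι) : (m : ℝ)⁻¹ * ∑ j, x (s j) ^ 2 ≤ ⨆ i, x i ^ 2 := by
  have hle : ∀ j, x (s j) ^ 2 ≤ ⨆ i, x i ^ 2 := fun j ↦
    le_ciSup (f := fun i ↦ x i ^ 2) (Set.finite_range _).bddAbove (s j)
  rw [inv_mul_le_iff₀ (by exact_mod_cast hm)]
  simpa using Finset.sum_le_card_nsmul Finset.univ _ _ fun j _ ↦ hle j

theorem stmt_11_general {Ω : Type*} [MeasurableSpace Ω] (μ : Measure Ω) [IsProbabilityMeasure μ]
    {n m : ℕ} (hm : 0 < m) (x : Fin n → ℝ) (hx : x ≠ 0)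
    (ε : ℝ) (hε : 0 < ε) (hε1 : ε * (⨆ i, x i ^ 2) ≤ 1)
    (I : ℕ → Fin m → Ω → Fin n) (hmeas : ∀ k j, Measurable (I k j))
    (hunif : ∀ (k : ℕ) (j : Fin m) (a : Fin n), μ {ω | I k j ω = a} = (n : ENNReal)⁻¹)
    (hindep : iIndepFun
      (fun kj : ℕ × Fin m => I kj.1 kj.2) μ)
    (G : ℕ → Ω → ℝ)
    (hG : ∀ (k : ℕ) (ω : Ω), G k ω = (m : ℝ)⁻¹ * ∑ j : Fin m, x (I k j ω) ^ 2)
    (beta : ℕ → Ω → ℝ)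
    (hbeta : ∀ (k : ℕ) (ω : Ω), beta (k + 1) ω = (1 - ε * G k ω) * beta k ω) :
    ∀ᵐ ω ∂μ, Tendsto (fun k => beta k ω) atTop (nhds 0) := by
  obtain ⟨i₀, hi₀⟩ : ∃ i, x i ≠ 0 := Function.ne_iff.mp hx
  let j₀ : Fin m := ⟨0, hm⟩
  let E : ℕ → Set Ω := fun k ↦ I k j₀ ⁻¹' {i₀}
  have hE : ∀ k, MeasurableSet (E k) := fun k ↦ hmeas k j₀ (measurableSet_singleton i₀)
  have hE_indep : iIndepSet E μ :=
    (hindep.precomp (g := fun k ↦ (k, j₀)) fun _ _ h ↦ congrArg Prod.fst h).iIndepSet_preimage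
      fun _ ↦ measurableSet_singleton i₀
  have hE_sum : ∑' k, μ (E k) = ⊤ := by
    simp only [E, Set.preimage, Set.mem_singleton_iff, hunif]
    exact ENNReal.tsum_const_eq_top_of_ne_zero (by simp)
  filter_upwards [hE_indep.ae_frequently_mem hE hE_sum] with ω hω
  have hG_le : ∀ k, G k ω ≤ ⨆ i, x i ^ 2 := fun k ↦ hG k ω ▸ inv_mul_sum_sq_le_iSup hm x _
  have hm' : (0 : ℝ) < m := by exact_mod_cast hm
  refine tendsto_zero_of_succ_eq_mul_of_frequently_abs_le (c := 1 - ε * ((m : ℝ)⁻¹ * x i₀ ^ 2))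
    (hbeta · ω) (fun k ↦ ?_) (sub_lt_self _ (by positivity)) ?_
  · have hG_nonneg : 0 ≤ G k ω := by rw [hG]; positivity
    simpa using abs_one_sub_mul_le_one_sub_mul hε.le hG_nonneg (hG_le k) hε1
  · refine hω.mono fun k hk ↦ abs_one_sub_mul_le_one_sub_mul hε.le ?_ (hG_le k) hε1
    rw [hG, ← show I k j₀ ω = i₀ from hk]
    gcongr
    exact Finset.single_le_sum (fun j _ ↦ sq_nonneg (x (I k j ω))) (Finset.mem_univ j₀)

/-- for the univariate responseless least squares problem, the SGD iterates
`β⁽ᵏ⁾ = ∏_{j=1}^k (1 − ε G_j) · β⁽⁰⁾`, with i.i.d. uniform with-replacement mini-batches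
and `ε · maxᵢ xᵢ² ≤ 1`, converge to `0` almost surely. -/
theorem stmt_11 {Ω : Type*} [MeasurableSpace Ω] (μ : Measure Ω) [IsProbabilityMeasure μ]
    {n m : ℕ} (hm : 0 < m) (x : Fin n → ℝ) (hx : x ≠ 0)
    (ε : ℝ) (hε : 0 < ε) (hε1 : ε * (⨆ i, x i ^ 2) ≤ 1)
    (β₀ : ℝ)
    (I : ℕ → Fin m → Ω → Fin n) (hmeas : ∀ k j, Measurable (I k j))
    (hunif : ∀ (k : ℕ) (j : Fin m) (a : Fin n), μ {ω | I k j ω = a} = (n : ENNReal)⁻¹)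
    (hindep : iIndepFun
      (fun kj : ℕ × Fin m => I kj.1 kj.2) μ)
    (G : ℕ → Ω → ℝ)
    (hG : ∀ (k : ℕ) (ω : Ω), G k ω = (m : ℝ)⁻¹ * ∑ j : Fin m, x (I k j ω) ^ 2)
    (beta : ℕ → Ω → ℝ)
    (hbeta0 : ∀ ω, beta 0 ω = β₀)
    (hbeta : ∀ (k : ℕ) (ω : Ω), beta (k + 1) ω = (1 - ε * G k ω) * beta k ω) :
    ∀ᵐ ω ∂μ, Tendsto (fun k => beta k ω) atTop (nhds 0) :=
  stmt_11_general μ hm x hx ε hε hε1 I hmeas hunif hindep G hG beta hbeta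
end

section
/- Fix y ∈ ℝⁿ, a real n×p matrix X, β ∈ ℝᵖ and a real number s. Let h(β) = y − Xβ, F(β) = diag(h(β))² and Σ̂ = XᵀX/n. Then tr[ Xᵀ F(β) X · exp(2sΣ̂) ] ≤ n · ‖y − Xβ‖₂² · tr[ Σ̂ · exp(2sΣ̂) ], where exp denotes the matrix exponential. -/
/-!
Since `diag(h)² ≤ ‖h‖² • 1` in the Loewner order, conjugating by `X` gives
`Xᵀ F(β) X ≤ ‖h‖² • XᵀX = n ‖h‖² • Σ̂`. Pairing with `exp(2sΣ̂) = exp(sΣ̂)²`, the square of a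
symmetric matrix, is monotone for the trace, because `tr(B S²) = tr(Sᵀ B S) ≥ 0` for `B ⪰ 0`.
-/

open Matrix

namespace Matrix

variable {m n : Type*} [Fintype m]

theorem PosSemidef.trace_mul_mul_self_nonneg {R : Type*} [CommRing R] [PartialOrder R]
    [StarRing R] [AddLeftMono R] {B S : Matrix m m R} (hB : B.PosSemidef) (hS : S.IsHermitian) :
    0 ≤ (B * (S * S)).trace := by
  have := (hB.conjTranspose_mul_mul_same S).trace_nonneg
  rwa [hS.eq, Matrix.mul_assoc, trace_mul_comm, Matrix.mul_assoc] at this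

section RCLike

open scoped ComplexOrder

variable {𝕜 : Type*} [RCLike 𝕜] [DecidableEq m]

theorem exp_eq_exp_half_mul_self (A : Matrix m m 𝕜) :
    NormedSpace.exp A = NormedSpace.exp ((2 : ℝ)⁻¹ • A) * NormedSpace.exp ((2 : ℝ)⁻¹ • A) := by
  rw [← exp_add_of_commute _ _ (Commute.refl _), ← add_smul, ← two_mul,
    mul_inv_cancel₀ two_ne_zero, one_smul]

theorem trace_mul_exp_le_of_posSemidef_sub {A B H : Matrix m m 𝕜} (hAB : (B - A).PosSemidef)
    (hH : H.IsHermitian) :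
    (A * NormedSpace.exp H).trace ≤ (B * NormedSpace.exp H).trace := by
  have := hAB.trace_mul_mul_self_nonneg (hH.smul (IsSelfAdjoint.all (2 : ℝ)⁻¹)).exp
  rwa [← exp_eq_exp_half_mul_self, Matrix.sub_mul, trace_sub, sub_nonneg] at this

end RCLike

theorem posSemidef_sum_smul_transpose_mul_self_sub [DecidableEq m] [Finite n] {d : m → ℝ}
    (hd : 0 ≤ d) (X : Matrix m n ℝ) :
    ((∑ i, d i) • (Xᵀ * X) - Xᵀ * diagonal d * X).PosSemidef := by
  have hdiag : (diagonal fun i => ∑ j, d j - d i).PosSemidef :=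
    PosSemidef.diagonal fun i =>
      sub_nonneg.2 (Finset.single_le_sum (fun j _ => hd j) (Finset.mem_univ i))
  have := hdiag.conjTranspose_mul_mul_same X
  rwa [conjTranspose_eq_transpose_of_trivial, ← diagonal_sub, ← smul_one_eq_diagonal (m := m),
    Matrix.mul_sub, Matrix.sub_mul, Matrix.mul_smul, Matrix.mul_one, Matrix.smul_mul] at this

/-- `(0 : ℝ)⁻¹ = 0` is harmless here: with no rows, `Xᵀ * X = 0`. -/
theorem natCast_smul_inv_smul_transpose_mul_self {p : Type*} {k : ℕ} (X : Matrix (Fin k) p ℝ) :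
    (k : ℝ) • ((k : ℝ)⁻¹ • (Xᵀ * X)) = Xᵀ * X := by
  rcases eq_or_ne k 0 with rfl | hk
  · ext; simp [Matrix.mul_apply]
  · rw [smul_smul, mul_inv_cancel₀ (Nat.cast_ne_zero.2 hk), one_smul]

end Matrix

/-- with `h(β) = y − Xβ`, `F(β) = diag(h(β))²` and `Σ̂ = XᵀX/n`, for any
real `s`, `tr[Xᵀ F(β) X · exp(2sΣ̂)] ≤ n · ‖y − Xβ‖₂² · tr[Σ̂ · exp(2sΣ̂)]`. -/
theorem stmt_12 {n p : ℕ} (y : Fin n → ℝ) (X : Matrix (Fin n) (Fin p) ℝ)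
    (β : Fin p → ℝ) (s : ℝ) :
    (Xᵀ * Matrix.diagonal (fun i => (y i - (X *ᵥ β) i) ^ 2) * X *
        NormedSpace.exp ((2 * s) • ((n : ℝ)⁻¹ • (Xᵀ * X)))).trace ≤
      (n : ℝ) * (∑ i, (y i - (X *ᵥ β) i) ^ 2) *
        (((n : ℝ)⁻¹ • (Xᵀ * X)) *
          NormedSpace.exp ((2 * s) • ((n : ℝ)⁻¹ • (Xᵀ * X)))).trace := by
  set S := (n : ℝ)⁻¹ • (Xᵀ * X)
  have hS : S.IsHermitian := (isHermitian_conjTranspose_mul_self X).smul (IsSelfAdjoint.all _)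
  calc _ ≤ ((∑ i, (y i - (X *ᵥ β) i) ^ 2) • (Xᵀ * X) *
        NormedSpace.exp ((2 * s) • S)).trace :=
        trace_mul_exp_le_of_posSemidef_sub
          (posSemidef_sum_smul_transpose_mul_self_sub (fun i => sq_nonneg _) X)
          (hS.smul (IsSelfAdjoint.all _))
    _ = _ := by
      rw [← natCast_smul_inv_smul_transpose_mul_self X, smul_smul, Matrix.smul_mul, trace_smul,
        smul_eq_mul, mul_comm (∑ i, _)]
end

section
/- Let X be a nonzero real n×p matrix, y ∈ ℝⁿ, σ₊ the smallest nonzero singular value of X, and ε > 0, m > 0 reals. Let b be the orthogonal projection of y onto the orthocomplement of the column space of X (the least squares residual y − X β̂ols), and for β ∈ ℝᵖ set r = y − Xβ and q = X(β − β̂ols), so that r = b − q. Then (ε²/(mn²)) Σ_{i=1}^n r_i² [(XXᵀ)²]_{ii} − ‖Xᵀ r‖₂²/n² ≤ −c₀ ‖q‖₂² + C₀, where c₀ = σ₊²/n² − 2ε² maxᵢ [(XXᵀ)²]ᵢᵢ/(mn²) and C₀ = 2ε² ‖b‖₂² maxᵢ [(XXᵀ)²]ᵢᵢ/(mn²). 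-/
/-!
With `b = y − Xβ̂ols` and `v = β − β̂ols` we have `r = b − Xv`, and `Xᵀb = 0` turns the gradient
into `Xᵀr = −XᵀX v`. Expanding `v` in an eigenbasis of `XᵀX`, every eigenvalue `μ` is `0` or at
least `σ²`, so `σ²μ ≤ μ²` and hence `σ²‖Xv‖² ≤ ‖XᵀX v‖² = ‖Xᵀr‖²`. The weighted sum is at most
`maxᵢ [(XXᵀ)²]ᵢᵢ ‖b − Xv‖² ≤ 2 maxᵢ [(XXᵀ)²]ᵢᵢ (‖b‖² + ‖Xv‖²)`, and the two bounds combine to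
the claim.
-/

open Matrix
open scoped RealInnerProductSpace

theorem LinearMap.IsSymmetric.mul_inner_map_self_le_norm_sq {E : Type*} [NormedAddCommGroup E]
    [InnerProductSpace ℝ E] [FiniteDimensional ℝ E] {T : E →ₗ[ℝ] E} (hT : T.IsSymmetric)
    {c : ℝ} (hc : 0 ≤ c) (hspec : ∀ s ∈ spectrum ℝ T, s ≠ 0 → c ≤ s) (v : E) :
    c * ⟪v, T v⟫ ≤ ‖T v‖ ^ 2 := by
  set b := hT.eigenvectorBasis rfl
  set μ := hT.eigenvalues rfl
  have hcoord : ∀ i, ⟪b i, T v⟫ = μ i * ⟪b i, v⟫ := fun i => by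
    rw [← hT, hT.apply_eigenvectorBasis, real_inner_smul_left, RCLike.ofReal_real_eq_id, id_eq]
  have hquad : ⟪v, T v⟫ = ∑ i, μ i * ⟪b i, v⟫ ^ 2 := by
    rw [← b.sum_inner_mul_inner]
    exact Finset.sum_congr rfl fun i _ => by rw [hcoord, real_inner_comm]; ring
  have hnorm : ‖T v‖ ^ 2 = ∑ i, μ i ^ 2 * ⟪b i, v⟫ ^ 2 := by
    rw [← b.sum_sq_inner_right]
    exact Finset.sum_congr rfl fun i _ => by rw [hcoord]; ring
  have hμ : ∀ i, c * μ i ≤ μ i ^ 2 := fun i => by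
    rcases eq_or_ne (μ i) 0 with h | h
    · simp [h]
    · have := hspec _ (hT.hasEigenvalue_eigenvalues rfl i).mem_spectrum h
      rw [RCLike.ofReal_real_eq_id, id_eq] at this
      nlinarith
  rw [hquad, hnorm, Finset.mul_sum]
  exact Finset.sum_le_sum fun i _ => by nlinarith [hμ i, sq_nonneg ⟪b i, v⟫]

theorem Matrix.IsHermitian.mul_dotProduct_mulVec_le {ι : Type*} [Fintype ι] [DecidableEq ι]
    {A : Matrix ι ι ℝ} (hA : A.IsHermitian)
    {c : ℝ} (hc : 0 ≤ c) (hspec : ∀ s ∈ spectrum ℝ A, s ≠ 0 → c ≤ s) (v : ι → ℝ) :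
    c * (v ⬝ᵥ A *ᵥ v) ≤ A *ᵥ v ⬝ᵥ A *ᵥ v := by
  have := (isSymmetric_toEuclideanLin_iff.mpr hA).mul_inner_map_self_le_norm_sq hc
    (by rwa [spectrum_toLpLin]) (WithLp.toLp 2 v)
  rw [← real_inner_self_eq_norm_sq] at this
  rwa [dotProduct_comm]

theorem Matrix.mul_dotProduct_mulVec_self_le {ι κ : Type*} [Fintype ι] [Fintype κ]
    [DecidableEq κ] (X : Matrix ι κ ℝ) {c : ℝ} (hc : 0 ≤ c)
    (hspec : ∀ s ∈ spectrum ℝ (Xᵀ * X), s ≠ 0 → c ≤ s) (v : κ → ℝ) :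
    c * (X *ᵥ v ⬝ᵥ X *ᵥ v) ≤ (Xᵀ * X) *ᵥ v ⬝ᵥ (Xᵀ * X) *ᵥ v := by
  have hquad : v ⬝ᵥ (Xᵀ * X) *ᵥ v = X *ᵥ v ⬝ᵥ X *ᵥ v := by
    rw [← mulVec_mulVec, dotProduct_mulVec, vecMul_transpose]
  have := (isHermitian_conjTranspose_mul_self X).mul_dotProduct_mulVec_le hc hspec v
  rwa [conjTranspose_eq_transpose_of_trivial, hquad] at this

theorem sum_sq_mul_le_iSup_mul_sum_sq {ι : Type*} [Fintype ι] (r w : ι → ℝ) :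
    ∑ i, r i ^ 2 * w i ≤ (⨆ i, w i) * ∑ i, r i ^ 2 := by
  rw [Finset.mul_sum]
  exact Finset.sum_le_sum fun i _ => by
    rw [mul_comm (⨆ i, w i)]
    exact mul_le_mul_of_nonneg_left (le_ciSup (Set.finite_range w).bddAbove i) (sq_nonneg _)

theorem sum_sq_sub_le {ι : Type*} [Fintype ι] (a b : ι → ℝ) :
    ∑ i, (a - b) i ^ 2 ≤ 2 * (∑ i, a i ^ 2 + ∑ i, b i ^ 2) := by
  rw [← Finset.sum_add_distrib, Finset.mul_sum]
  exact Finset.sum_le_sum fun i _ => by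
    simpa [sub_eq_add_neg] using add_sq_le (a := a i) (b := -b i)

theorem stmt_15_general {n p : ℕ} (X : Matrix (Fin n) (Fin p) ℝ) (y : Fin n → ℝ)
    (σ : ℝ)
    (hσmin : ∀ s ∈ spectrum ℝ (Xᵀ * X), s ≠ 0 → σ ^ 2 ≤ s)
    (ε m : ℝ) (hm : 0 < m)
    (βols : Fin p → ℝ) (hols : Xᵀ *ᵥ (y - X *ᵥ βols) = 0)
    (β : Fin p → ℝ) :
    ε ^ 2 / (m * (n : ℝ) ^ 2) *
        ∑ i, (y - X *ᵥ β) i ^ 2 * ((X * Xᵀ) ^ 2 : Matrix (Fin n) (Fin n) ℝ) i i -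
        (∑ i, (Xᵀ *ᵥ (y - X *ᵥ β)) i ^ 2) / (n : ℝ) ^ 2 ≤
      -(σ ^ 2 / (n : ℝ) ^ 2 -
            2 * ε ^ 2 * (⨆ i, ((X * Xᵀ) ^ 2 : Matrix (Fin n) (Fin n) ℝ) i i) /
              (m * (n : ℝ) ^ 2)) *
          ∑ i, (X *ᵥ (β - βols)) i ^ 2 +
        2 * ε ^ 2 * (∑ i, (y - X *ᵥ βols) i ^ 2) *
          (⨆ i, ((X * Xᵀ) ^ 2 : Matrix (Fin n) (Fin n) ℝ) i i) / (m * (n : ℝ) ^ 2) := by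
  set M := ⨆ i, ((X * Xᵀ) ^ 2 : Matrix (Fin n) (Fin n) ℝ) i i
  set b := y - X *ᵥ βols
  set v := β - βols
  have hres : y - X *ᵥ β = b - X *ᵥ v := by
    simp only [b, v, mulVec_sub]
    abel
  have hgrad : Xᵀ *ᵥ (y - X *ᵥ β) = -((Xᵀ * X) *ᵥ v) := by
    rw [hres, mulVec_sub, hols, zero_sub, mulVec_mulVec]
  have hweighted : ∑ i, (y - X *ᵥ β) i ^ 2 * ((X * Xᵀ) ^ 2 : Matrix (Fin n) (Fin n) ℝ) i i ≤
      M * (2 * (∑ i, b i ^ 2 + ∑ i, (X *ᵥ v) i ^ 2)) := by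
    refine (sum_sq_mul_le_iSup_mul_sum_sq _ _).trans (mul_le_mul_of_nonneg_left ?_ ?_)
    · rw [hres]
      exact sum_sq_sub_le _ _
    · exact Real.iSup_nonneg fun i => ((posSemidef_self_mul_conjTranspose X).pow 2).diag_nonneg
  have hgrad_sq : σ ^ 2 * ∑ i, (X *ᵥ v) i ^ 2 ≤ ∑ i, (Xᵀ *ᵥ (y - X *ᵥ β)) i ^ 2 := by
    simpa [hgrad, dotProduct, sq] using X.mul_dotProduct_mulVec_self_le (sq_nonneg σ) hσmin v
  calc _ ≤ ε ^ 2 / (m * (n : ℝ) ^ 2) * (M * (2 * (∑ i, b i ^ 2 + ∑ i, (X *ᵥ v) i ^ 2))) -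
        (σ ^ 2 * ∑ i, (X *ᵥ v) i ^ 2) / (n : ℝ) ^ 2 := by
        gcongr
    _ = _ := by ring

/-- the drift bound in the underparametrized case.  With `σ₊` the smallest
nonzero singular value of a nonzero matrix `X`, `β̂ols` a least squares solution (so that
`b = y − Xβ̂ols` is the projection of `y` onto the orthocomplement of `col(X)`, i.e.
`Xᵀb = 0`), `r = y − Xβ` and `q = X(β − β̂ols)`,
`(ε²/(mn²)) Σᵢ rᵢ² [(XXᵀ)²]ᵢᵢ − ‖Xᵀr‖₂²/n² ≤ −c₀‖q‖₂² + C₀` where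
`c₀ = σ₊²/n² − 2ε² maxᵢ [(XXᵀ)²]ᵢᵢ/(mn²)` and `C₀ = 2ε²‖b‖₂² maxᵢ [(XXᵀ)²]ᵢᵢ/(mn²)`. -/
theorem stmt_15 {n p : ℕ} (X : Matrix (Fin n) (Fin p) ℝ) (hX : X ≠ 0) (y : Fin n → ℝ)
    (σ : ℝ) (hσpos : 0 < σ)
    (hσ : σ ^ 2 ∈ spectrum ℝ (Xᵀ * X))
    (hσmin : ∀ s ∈ spectrum ℝ (Xᵀ * X), s ≠ 0 → σ ^ 2 ≤ s)
    (ε m : ℝ) (hε : 0 < ε) (hm : 0 < m)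
    (βols : Fin p → ℝ) (hols : Xᵀ *ᵥ (y - X *ᵥ βols) = 0)
    (β : Fin p → ℝ) :
    ε ^ 2 / (m * (n : ℝ) ^ 2) *
        ∑ i, (y - X *ᵥ β) i ^ 2 * ((X * Xᵀ) ^ 2 : Matrix (Fin n) (Fin n) ℝ) i i -
        (∑ i, (Xᵀ *ᵥ (y - X *ᵥ β)) i ^ 2) / (n : ℝ) ^ 2 ≤
      -(σ ^ 2 / (n : ℝ) ^ 2 -
            2 * ε ^ 2 * (⨆ i, ((X * Xᵀ) ^ 2 : Matrix (Fin n) (Fin n) ℝ) i i) /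
              (m * (n : ℝ) ^ 2)) *
          ∑ i, (X *ᵥ (β - βols)) i ^ 2 +
        2 * ε ^ 2 * (∑ i, (y - X *ᵥ βols) i ^ 2) *
          (⨆ i, ((X * Xᵀ) ^ 2 : Matrix (Fin n) (Fin n) ℝ) i i) / (m * (n : ℝ) ^ 2) :=
  stmt_15_general X y σ hσmin ε m hm βols hols β
end

section
/- Let φ(x) = x(1 + e^{−x})/(1 − e^{−x}) for x > 0. Then for every t > 0, every L > 0 and every s with 0 < s ≤ L, one has 1 − e^{−2ts} ≤ (φ(tL)/t) · (1 − e^{−ts})²/s. -/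
/-! With `a = ts`, the identity `1 - e^{-2a} = (1 - e^{-a})(1 + e^{-a}) = φ(a) (1 - e^{-a})² / a`
turns the inequality into `φ(ts) ≤ φ(tL)`, i.e. into the monotonicity of `φ` on `(0, ∞)`.
Writing `u = e^{-x}`, the numerator of `φ'(x)` is `1 - u² - 2xu = 2u (sinh x - x) ≥ 0`. -/

open Real Set

noncomputable def phi (x : ℝ) : ℝ := x * (1 + exp (-x)) / (1 - exp (-x))

lemma one_sub_exp_neg_pos {x : ℝ} (hx : 0 < x) : 0 < 1 - exp (-x) :=
  sub_pos.mpr (exp_lt_one_iff.mpr (neg_lt_zero.mpr hx))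

lemma hasDerivAt_phi {x : ℝ} (hx : 0 < x) :
    HasDerivAt phi ((1 - exp (-x) ^ 2 - 2 * x * exp (-x)) / (1 - exp (-x)) ^ 2) x := by
  have hexp : HasDerivAt (fun y => exp (-y)) (-exp (-x)) x := by
    simpa using (hasDerivAt_neg x).exp
  have hphi := ((hasDerivAt_id' x).mul ((hasDerivAt_const x 1).add hexp)).div
    ((hasDerivAt_const x 1).sub hexp) (one_sub_exp_neg_pos hx).ne'
  exact hphi.congr_deriv (by simp only [Pi.add_apply, Pi.sub_apply, Pi.mul_apply]; ring)

lemma two_mul_mul_exp_neg_le {x : ℝ} (hx : 0 ≤ x) : 2 * x * exp (-x) ≤ 1 - exp (-x) ^ 2 := by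
  have hsinh : x ≤ sinh x := self_le_sinh_iff.mpr hx
  have hinv : exp x * exp (-x) = 1 := by rw [← exp_add, add_neg_cancel, exp_zero]
  rw [sinh_eq] at hsinh
  nlinarith [mul_le_mul_of_nonneg_right hsinh (exp_pos (-x)).le]

lemma monotoneOn_phi : MonotoneOn phi (Ioi 0) := by
  refine monotoneOn_of_hasDerivWithinAt_nonneg
    (f' := fun x => (1 - exp (-x) ^ 2 - 2 * x * exp (-x)) / (1 - exp (-x)) ^ 2) (convex_Ioi 0)
    (fun x hx => (hasDerivAt_phi hx).continuousAt.continuousWithinAt) (fun x hx => ?_)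
    (fun x hx => ?_)
  · rw [interior_Ioi] at hx
    exact (hasDerivAt_phi hx).hasDerivWithinAt
  · rw [interior_Ioi] at hx
    exact div_nonneg (sub_nonneg.mpr (two_mul_mul_exp_neg_le hx.le)) (sq_nonneg _)

lemma one_sub_exp_neg_two_mul_eq {x : ℝ} (hx : 0 < x) :
    1 - exp (-(2 * x)) = phi x * (1 - exp (-x)) ^ 2 / x := by
  have hden := (one_sub_exp_neg_pos hx).ne'
  rw [phi, show -(2 * x) = -x + -x by ring, exp_add]
  field_simp
  ring

/-- with `φ(x) = x(1 + e^{−x})/(1 − e^{−x})`, for every `t > 0`, `L > 0`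
and `0 < s ≤ L`, `1 − e^{−2ts} ≤ (φ(tL)/t) · (1 − e^{−ts})²/s`. -/
theorem stmt_17 (φ : ℝ → ℝ)
    (hφ : ∀ x : ℝ, 0 < x → φ x = x * (1 + Real.exp (-x)) / (1 - Real.exp (-x))) :
    ∀ t L s : ℝ, 0 < t → 0 < L → 0 < s → s ≤ L →
      1 - Real.exp (-(2 * t * s)) ≤
        φ (t * L) / t * ((1 - Real.exp (-(t * s))) ^ 2 / s) := by
  intro t L s ht hL hs hsL
  have hts : 0 < t * s := mul_pos ht hs
  have hmono : phi (t * s) ≤ phi (t * L) :=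
    monotoneOn_phi hts (mul_pos ht hL) (mul_le_mul_of_nonneg_left hsL ht.le)
  calc 1 - exp (-(2 * t * s))
      = phi (t * s) * (1 - exp (-(t * s))) ^ 2 / (t * s) := by
        rw [mul_assoc]; exact one_sub_exp_neg_two_mul_eq hts
    _ ≤ phi (t * L) * (1 - exp (-(t * s))) ^ 2 / (t * s) := by gcongr
    _ = φ (t * L) / t * ((1 - exp (-(t * s))) ^ 2 / s) := by
        rw [hφ _ (mul_pos ht hL), ← phi]
        field_simp
end

section
/- Let X be a real n×p matrix, β₀ ∈ ℝᵖ, σ > 0, and let η be a random vector in ℝⁿ with E[η_i] = 0 and E[η_i η_j] = σ² if i = j and 0 otherwise. Let y = Xβ₀ + η and β̂gf(t) = (XᵀX)⁺(I − exp(−tΣ̂))Xᵀy with Σ̂ = XᵀX/n. Then for every t ≥ 0, the estimation variance of gradient flow satisfies E‖β̂gf(t) − E β̂gf(t)‖₂² = σ² · tr[ (XᵀX)⁺ (I − exp(−tΣ̂))² ]. -/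
open Matrix Filter MeasureTheory

/-!
`β̂gf(t) = M y` for the fixed matrix `M = (XᵀX)⁺ (I − exp(−tΣ̂)) Xᵀ`, so its deviation from its
mean is `M η`, and since `η` is white noise, `E‖M η‖² = σ² tr(M Mᵀ)`. Diagonalising
`XᵀX = U diag(d) Uᵀ` with `U` orthogonal, the Tikhonov limit `(d² + δ)⁻¹ d → d⁻¹` (with the
convention `0⁻¹ = 0`, which is exactly the pseudoinverse of an eigenvalue) gives
`(XᵀX)⁺ = U diag(d⁻¹) Uᵀ`, and `I − exp(−tΣ̂) = U diag(1 − exp(−t d / n)) Uᵀ`. Everything is then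
a function of the eigenvalues, and `M Mᵀ = (XᵀX)⁺ (I − exp(−tΣ̂))²` reduces to `d⁻¹ d d⁻¹ = d⁻¹`.
-/

open Topology

theorem tendsto_inv_mul_self_add_mul_nhdsGT (x : ℝ) :
    Tendsto (fun δ : ℝ => (x * x + δ)⁻¹ * x) (𝓝[>] 0) (𝓝 x⁻¹) := by
  rcases eq_or_ne x 0 with rfl | hx
  · simp
  · have hcont : ContinuousAt (fun δ : ℝ => (x * x + δ)⁻¹ * x) 0 := by
      fun_prop (disch := simpa using hx)
    have hval : (x * x + 0)⁻¹ * x = x⁻¹ := by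
      rw [add_zero, mul_inv, mul_assoc, inv_mul_cancel₀ hx, mul_one]
    have h := hcont.tendsto.mono_left (nhdsWithin_le_nhds (s := Set.Ioi 0))
    rwa [hval] at h

namespace Matrix

variable {ι : Type*} [Fintype ι] [DecidableEq ι]

noncomputable def diagConj (U : unitaryGroup ι ℝ) : (ι → ℝ) →ₐ[ℝ] Matrix ι ι ℝ :=
  (Unitary.conjStarAlgAut ℝ _ U).toAlgEquiv.toAlgHom.comp (diagonalAlgHom ℝ)

variable (U : unitaryGroup ι ℝ)

theorem diagConj_apply (d : ι → ℝ) : diagConj U d = U * diagonal d * star (U : Matrix ι ι ℝ) :=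
  rfl

theorem exists_eq_diagConj_of_isHermitian {A : Matrix ι ι ℝ} (hA : A.IsHermitian) :
    ∃ (U : unitaryGroup ι ℝ) (d : ι → ℝ), A = diagConj U d :=
  ⟨hA.eigenvectorUnitary, hA.eigenvalues, by simpa [diagConj_apply] using hA.spectral_theorem⟩

theorem transpose_diagConj (d : ι → ℝ) : (diagConj U d)ᵀ = diagConj U d := by
  simp [diagConj_apply, transpose_mul, star_eq_conjTranspose, Matrix.mul_assoc]

theorem continuous_diagConj : Continuous (diagConj U) :=
  (continuous_const.matrix_mul continuous_id.matrix_diagonal).matrix_mul continuous_const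

theorem exp_diagConj (d : ι → ℝ) :
    NormedSpace.exp (diagConj U d) = diagConj U (NormedSpace.exp d) := by
  have hU : (U : Matrix ι ι ℝ) * star (U : Matrix ι ι ℝ) = 1 := Unitary.mul_star_self_of_mem U.2
  rw [diagConj_apply, diagConj_apply, ← inv_eq_right_inv hU,
    exp_conj _ _ ((isUnit_iff_isUnit_det _).mpr (isUnit_det_of_right_inverse hU)), exp_diagonal]

theorem inv_diagConj {d : ι → ℝ} (hd : ∀ i, d i ≠ 0) : (diagConj U d)⁻¹ = diagConj U d⁻¹ := by
  refine inv_eq_right_inv ?_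
  rw [← map_mul, ← map_one (diagConj U)]
  exact congrArg _ (funext fun i => mul_inv_cancel₀ (hd i))

theorem moorePenrose_diagConj {p : ℕ} (U : unitaryGroup (Fin p) ℝ) (d : Fin p → ℝ) :
    moorePenrose (diagConj U d) = diagConj U d⁻¹ := by
  have hreg : ∀ δ : ℝ, 0 < δ →
      ((diagConj U d)ᵀ * diagConj U d + δ • 1)⁻¹ * (diagConj U d)ᵀ
        = diagConj U (fun i => (d i * d i + δ)⁻¹ * d i) := by
    intro δ hδ
    rw [transpose_diagConj, ← map_one (diagConj U), ← map_smul, ← map_mul, ← map_add,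
      inv_diagConj _ fun i => by
        simp only [Pi.add_apply, Pi.mul_apply, Pi.smul_apply, Pi.one_apply, smul_eq_mul, mul_one]
        exact (add_pos_of_nonneg_of_pos (mul_self_nonneg _) hδ).ne', ← map_mul]
    congr 1
    funext i
    simp
  refine Tendsto.limUnder_eq (Tendsto.congr' ?_ (((continuous_diagConj U).tendsto _).comp
    (tendsto_pi_nhds.mpr fun i => tendsto_inv_mul_self_add_mul_nhdsGT (d i))))
  filter_upwards [self_mem_nhdsWithin] with δ hδ using (hreg δ hδ).symm

end Matrix

noncomputable def gfMatrix {n p : ℕ} (X : Matrix (Fin n) (Fin p) ℝ) (t : ℝ) :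
    Matrix (Fin p) (Fin n) ℝ :=
  moorePenrose (Xᵀ * X) * (1 - NormedSpace.exp (-(t • ((n : ℝ)⁻¹ • (Xᵀ * X))))) * Xᵀ

theorem betaGF_eq_gfMatrix_mulVec {n p : ℕ} (X : Matrix (Fin n) (Fin p) ℝ) (y : Fin n → ℝ)
    (t : ℝ) : betaGF X y t = gfMatrix X t *ᵥ y :=
  rfl

theorem gfMatrix_mul_transpose {n p : ℕ} (X : Matrix (Fin n) (Fin p) ℝ) (t : ℝ) :
    gfMatrix X t * (gfMatrix X t)ᵀ =
      moorePenrose (Xᵀ * X) * (1 - NormedSpace.exp (-(t • ((n : ℝ)⁻¹ • (Xᵀ * X))))) ^ 2 := by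
  obtain ⟨U, d, hA⟩ : ∃ U d, Xᵀ * X = diagConj U d :=
    exists_eq_diagConj_of_isHermitian (isHermitian_conjTranspose_mul_self X)
  have hP : moorePenrose (Xᵀ * X) = diagConj U d⁻¹ := by
    rw [hA, moorePenrose_diagConj]
  have hE : 1 - NormedSpace.exp (-(t • ((n : ℝ)⁻¹ • (Xᵀ * X))))
      = diagConj U (1 - NormedSpace.exp (-(t • ((n : ℝ)⁻¹ • d)))) := by
    rw [hA, ← map_smul, ← map_smul, ← map_neg, exp_diagConj, map_sub, map_one]
  rw [gfMatrix, hP, hE, transpose_mul, transpose_mul, transpose_transpose, transpose_diagConj,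
    transpose_diagConj]
  simp only [Matrix.mul_assoc]
  rw [← Matrix.mul_assoc Xᵀ X, hA, sq]
  simp only [← map_mul]
  congr 1
  funext i
  simp only [Pi.mul_apply, Pi.inv_apply]
  rcases eq_or_ne (d i) 0 with h | h
  · simp [h]
  · field_simp

section WhiteNoise

variable {Ω ι κ : Type*} [MeasurableSpace Ω] {μ : Measure Ω} [Fintype κ]
  (M : Matrix ι κ ℝ) {η : Ω → κ → ℝ}

theorem integral_mulVec_apply (hint : ∀ j, Integrable (fun ω => η ω j) μ) (i : ι) :
    ∫ ω, (M *ᵥ η ω) i ∂μ = (M *ᵥ fun j => ∫ ω, η ω j ∂μ) i := by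
  simp only [mulVec, dotProduct]
  rw [integral_finsetSum _ fun j _ => (hint j).const_mul _]
  simp only [integral_const_mul]

variable [Fintype ι]

theorem sum_sq_mulVec (v : κ → ℝ) :
    ∑ i, (M *ᵥ v) i ^ 2 = ∑ i, ∑ j, ∑ k, M i j * M i k * (v j * v k) := by
  refine Finset.sum_congr rfl fun i _ => ?_
  rw [sq, mulVec, dotProduct, Finset.sum_mul_sum]
  exact Finset.sum_congr rfl fun j _ => Finset.sum_congr rfl fun k _ => by ring

theorem trace_mul_transpose_self : (M * Mᵀ).trace = ∑ i, ∑ j, M i j * M i j := by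
  simp [trace, mul_apply]

variable [DecidableEq κ] {σ : ℝ}

theorem integral_sum_sq_mulVec (hint2 : ∀ j k, Integrable (fun ω => η ω j * η ω k) μ)
    (hcov : ∀ j k, ∫ ω, η ω j * η ω k ∂μ = if j = k then σ ^ 2 else 0) :
    ∫ ω, ∑ i, (M *ᵥ η ω) i ^ 2 ∂μ = σ ^ 2 * (M * Mᵀ).trace := by
  have hsummand : ∀ i j k, Integrable (fun ω => M i j * M i k * (η ω j * η ω k)) μ :=
    fun i j k => (hint2 j k).const_mul _
  simp_rw [sum_sq_mulVec]
  rw [integral_finsetSum _ fun i _ => integrable_finsetSum _ fun j _ =>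
    integrable_finsetSum _ fun k _ => hsummand i j k, trace_mul_transpose_self, Finset.mul_sum]
  refine Finset.sum_congr rfl fun i _ => ?_
  rw [integral_finsetSum _ fun j _ => integrable_finsetSum _ fun k _ => hsummand i j k,
    Finset.mul_sum]
  refine Finset.sum_congr rfl fun j _ => ?_
  rw [integral_finsetSum _ fun k _ => hsummand i j k]
  simp only [integral_const_mul, hcov, mul_ite, mul_zero, Finset.sum_ite_eq, Finset.mem_univ,
    if_true]
  ring

theorem integral_sum_sq_sub_integral_mulVec_add [IsProbabilityMeasure μ] (b : κ → ℝ)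
    (hint : ∀ j, Integrable (fun ω => η ω j) μ)
    (hint2 : ∀ j k, Integrable (fun ω => η ω j * η ω k) μ) (hmean : ∀ j, ∫ ω, η ω j ∂μ = 0)
    (hcov : ∀ j k, ∫ ω, η ω j * η ω k ∂μ = if j = k then σ ^ 2 else 0) :
    ∫ ω, ∑ i, ((M *ᵥ (b + η ω)) i - ∫ ω', (M *ᵥ (b + η ω')) i ∂μ) ^ 2 ∂μ =
      σ ^ 2 * (M * Mᵀ).trace := by
  have hmeanM (i : ι) : ∫ ω, (M *ᵥ (b + η ω)) i ∂μ = (M *ᵥ b) i := by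
    rw [integral_mulVec_apply (η := fun ω => b + η ω) M fun j =>
      (integrable_const (b j)).add (hint j)]
    congr 2
    funext j
    simp only [Pi.add_apply]
    rw [integral_add (integrable_const _) (hint j), hmean, integral_const]
    simp
  simp_rw [hmeanM, mulVec_add, Pi.add_apply, add_sub_cancel_left]
  exact integral_sum_sq_mulVec M hint2 hcov

end WhiteNoise

theorem stmt_18_general {Ω : Type*} [MeasurableSpace Ω] (μ : Measure Ω) [IsProbabilityMeasure μ]
    {n p : ℕ} (X : Matrix (Fin n) (Fin p) ℝ) (β₀ : Fin p → ℝ) (σ : ℝ)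
    (η : Ω → Fin n → ℝ)
    (hint : ∀ i, Integrable (fun ω => η ω i) μ)
    (hint2 : ∀ i j, Integrable (fun ω => η ω i * η ω j) μ)
    (hmean : ∀ i, ∫ ω, η ω i ∂μ = 0)
    (hcov : ∀ i j, ∫ ω, η ω i * η ω j ∂μ = if i = j then σ ^ 2 else 0)
    (y : Ω → Fin n → ℝ) (hy : ∀ ω, y ω = X *ᵥ β₀ + η ω) :
    ∀ t : ℝ, 0 ≤ t →
      ∫ ω, ∑ i, (betaGF X (y ω) t i - ∫ ω', betaGF X (y ω') t i ∂μ) ^ 2 ∂μ =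
        σ ^ 2 *
          (moorePenrose (Xᵀ * X) *
            ((1 : Matrix (Fin p) (Fin p) ℝ) -
              NormedSpace.exp (-(t • ((n : ℝ)⁻¹ • (Xᵀ * X))))) ^ 2).trace := by
  intro t _
  simp_rw [betaGF_eq_gfMatrix_mulVec, hy]
  rw [integral_sum_sq_sub_integral_mulVec_add _ _ hint hint2 hmean hcov, gfMatrix_mul_transpose]

/-- in the model `y = Xβ₀ + η` with `E[η] = 0` and `Cov(η) = σ²I`, the
estimation variance of gradient flow satisfies, for every `t ≥ 0`,
`E‖β̂gf(t) − Eβ̂gf(t)‖₂² = σ² · tr[(XᵀX)⁺ (I − exp(−tΣ̂))²]`. -/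
theorem stmt_18 {Ω : Type*} [MeasurableSpace Ω] (μ : Measure Ω) [IsProbabilityMeasure μ]
    {n p : ℕ} (X : Matrix (Fin n) (Fin p) ℝ) (β₀ : Fin p → ℝ) (σ : ℝ) (hσ : 0 < σ)
    (η : Ω → Fin n → ℝ)
    (hint : ∀ i, Integrable (fun ω => η ω i) μ)
    (hint2 : ∀ i j, Integrable (fun ω => η ω i * η ω j) μ)
    (hmean : ∀ i, ∫ ω, η ω i ∂μ = 0)
    (hcov : ∀ i j, ∫ ω, η ω i * η ω j ∂μ = if i = j then σ ^ 2 else 0)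
    (y : Ω → Fin n → ℝ) (hy : ∀ ω, y ω = X *ᵥ β₀ + η ω) :
    ∀ t : ℝ, 0 ≤ t →
      ∫ ω, ∑ i, (betaGF X (y ω) t i - ∫ ω', betaGF X (y ω') t i ∂μ) ^ 2 ∂μ =
        σ ^ 2 *
          (moorePenrose (Xᵀ * X) *
            ((1 : Matrix (Fin p) (Fin p) ℝ) -
              NormedSpace.exp (-(t • ((n : ℝ)⁻¹ • (Xᵀ * X))))) ^ 2).trace :=
  stmt_18_general μ X β₀ σ η hint hint2 hmean hcov y hy
end
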